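/- arXiv:1807.08418 — 10 statements merged into one kernel-verified Lean document; each statement's English description precedes it below -/
import Mathlib

section
/- Let C be a cyclic code of length n over the finite field F_q, let c ∈ C be a nonzero codeword of period t, let α ∈ F_q* and let i ∈ {0,1,…,n−1} be such that α·c = ρ^i(c), where ρ is the cyclic shift. Then α^r = 1, where r = t/gcd(t,i), and moreover α^{gcd(t,q−1)} = 1 (i.e., α belongs to the unique cyclic subgroup of F_q* of order gcd(t,q−1)). -/
/-- The cyclic shift `ρ` on words of length `n`: `(ρ c) i = c (i - 1)`. -/
def cshift {F : Type*} {n : ℕ} (c : ZMod n → F) : ZMod n → F := fun i => c (i - 1)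

lemma cshift_iterate_smul {F : Type*} [Field F] {n : ℕ} (α : F) (c : ZMod n → F)
    (m : ℕ) : cshift^[m] (α • c) = α • cshift^[m] c := by
  induction m with
  | zero => simp
  | succ k ih =>
    rw [Function.iterate_succ_apply', Function.iterate_succ_apply', ih]
    rfl

/-- If `C` is a cyclic code of length `n` over `F_q`, `c ∈ C` a nonzero codeword of
period `t`, `α ∈ F_q^*` and `0 ≤ i < n` are such that `α • c = ρ^i c`, then
`α ^ (t / gcd(t,i)) = 1` and `α ^ gcd(t, q-1) = 1`. -/
theorem stmt0 {F : Type*} [Field F] [Fintype F] {n : ℕ} [NeZero n]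
    (C : Submodule F (ZMod n → F)) (hcyc : ∀ c ∈ C, cshift c ∈ C)
    (c : ZMod n → F) (hcC : c ∈ C) (hc0 : c ≠ 0)
    (t : ℕ) (ht : IsLeast {t' : ℕ | 0 < t' ∧ cshift^[t'] c = c} t)
    (α : F) (hα : α ≠ 0) (i : ℕ) (hi : i < n)
    (heq : α • c = cshift^[i] c) :
    α ^ (t / Nat.gcd t i) = 1 ∧ α ^ (Nat.gcd t (Fintype.card F - 1)) = 1 := by
  obtain ⟨⟨htpos, htper⟩, _⟩ := ht
  -- iterate heq
  have hiter : ∀ k : ℕ, α ^ k • c = cshift^[k * i] c := by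
    intro k
    induction k with
    | zero => simp
    | succ k ih =>
      rw [pow_succ, mul_comm (α ^ k) α, mul_smul, ih, ← cshift_iterate_smul, heq,
        ← Function.iterate_add_apply]
      congr 1
      ring
  have hmulper : ∀ m : ℕ, cshift^[m * t] c = c := by
    intro m
    induction m with
    | zero => simp
    | succ m ih => rw [Nat.succ_mul, Function.iterate_add_apply, htper, ih]
  set g := Nat.gcd t i with hg
  set r := t / g with hr
  have hrt : r * g = t := Nat.div_mul_cancel (Nat.gcd_dvd_left t i)
  -- r * i is a multiple of t
  obtain ⟨i', hi'⟩ := Nat.gcd_dvd_right t i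
  have hri : r * i = i' * t := by
    rw [hi', ← hg, ← mul_assoc, hrt, mul_comm]
  have key : α ^ r • c = c := by rw [hiter r, hri, hmulper]
  obtain ⟨j, hj⟩ := Function.ne_iff.mp hc0
  have hr1 : α ^ r = 1 := by
    have h := congrFun key j
    simp only [Pi.smul_apply, smul_eq_mul] at h
    have hj' : c j ≠ 0 := by simpa using hj
    have : α ^ r * c j = 1 * c j := by rw [one_mul]; exact h
    exact mul_right_cancel₀ hj' this
  refine ⟨hr1, ?_⟩
  have ht1 : α ^ t = 1 := by rw [← hrt, pow_mul, hr1, one_pow]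
  have hq1 : α ^ (Fintype.card F - 1) = 1 := FiniteField.pow_card_sub_one_eq_one α hα
  have hdvd : orderOf α ∣ Nat.gcd t (Fintype.card F - 1) :=
    Nat.dvd_gcd (orderOf_dvd_of_pow_eq_one ht1) (orderOf_dvd_of_pow_eq_one hq1)
  exact orderOf_dvd_iff_pow_eq_one.mp hdvd
end

section
/- Let C be a cyclic code of length n and dimension k over F_q with exactly s distinct nonzero weights, and for each divisor t of n let B_t denote the number of nonzero codewords of C of period exactly t. Then, as rational numbers, s ≤ Σ_{t | n} B_t / lcm(t, q−1), and this quantity is at most 1 + Σ_{t | n, t > 1} B_t / lcm(t, q−1). -/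
set_option linter.unusedSectionVars false
set_option maxHeartbeats 1000000

/-- Hamming weight: the number of nonzero coordinates. -/
noncomputable def hwt {ι F : Type*} [Zero F] (c : ι → F) : ℕ := Set.ncard {i | c i ≠ 0}

/-- The period of a codeword: the smallest positive `t` with `ρ^t c = c`. -/
noncomputable def cperiod {F : Type*} {n : ℕ} (c : ZMod n → F) : ℕ :=
  sInf {t : ℕ | 0 < t ∧ cshift^[t] c = c}

section Aux
variable {F : Type*} [Field F] {n : ℕ} [NeZero n]

lemma cshift_apply (c : ZMod n → F) (j : ZMod n) : cshift c j = c (j - 1) := rfl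

lemma cshift_iter_apply (i : ℕ) (c : ZMod n → F) (j : ZMod n) :
    cshift^[i] c j = c (j - (i : ZMod n)) := by
  induction i generalizing j with
  | zero => simp
  | succ i ih =>
    rw [Function.iterate_succ_apply', cshift_apply, ih]
    congr 1
    push_cast
    ring

lemma cshift_inj : Function.Injective (cshift : (ZMod n → F) → ZMod n → F) := by
  intro c d h
  funext j
  have := congrFun h (j + 1)
  simpa [cshift_apply] using this

lemma cshift_iter_inj (i : ℕ) : Function.Injective (cshift^[i] : (ZMod n → F) → ZMod n → F) :=
  cshift_inj.iterate i

lemma cshift_smul (a : F) (c : ZMod n → F) : cshift (a • c) = a • cshift c := rfl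

lemma cshift_iter_smul (i : ℕ) (a : F) (c : ZMod n → F) :
    cshift^[i] (a • c) = a • cshift^[i] c := by
  induction i with
  | zero => rfl
  | succ i ih => rw [Function.iterate_succ_apply', ih, cshift_smul, Function.iterate_succ_apply']

lemma cshift_iter_mul_n (k : ℕ) (c : ZMod n → F) : cshift^[n * k] c = c := by
  funext j
  rw [cshift_iter_apply]
  simp [ZMod.natCast_self]

lemma cshift_zero : cshift (0 : ZMod n → F) = 0 := rfl

lemma cshift_iter_zero (i : ℕ) : cshift^[i] (0 : ZMod n → F) = 0 :=
  Function.iterate_fixed cshift_zero i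

lemma cperiod_mem (c : ZMod n → F) : 0 < cperiod c ∧ cshift^[cperiod c] c = c := by
  have hne : {t : ℕ | 0 < t ∧ cshift^[t] c = c}.Nonempty :=
    ⟨n, Nat.pos_of_ne_zero (NeZero.ne n), by simpa using cshift_iter_mul_n 1 c⟩
  exact Nat.sInf_mem hne

lemma cperiod_mul (c : ZMod n → F) (k : ℕ) : cshift^[cperiod c * k] c = c := by
  induction k with
  | zero => simp
  | succ k ih =>
    rw [Nat.mul_succ, Function.iterate_add_apply, (cperiod_mem c).2]
    exact ih

lemma cperiod_dvd {c : ZMod n → F} {t : ℕ} (h : cshift^[t] c = c) : cperiod c ∣ t := by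
  set p := cperiod c with hp
  have ppos := (cperiod_mem c).1
  have hmod : cshift^[t % p] c = c := by
    have h1 : cshift^[p * (t / p) + t % p] c = c := by
      rw [Nat.div_add_mod]
      exact h
    rw [Function.iterate_add_apply] at h1
    exact cshift_iter_inj _ (h1.trans (cperiod_mul c (t / p)).symm)
  by_contra hnd
  have hne : t % p ≠ 0 := fun h0 => hnd (Nat.dvd_of_mod_eq_zero h0)
  have hle : p ≤ t % p := Nat.sInf_le ⟨Nat.pos_of_ne_zero hne, hmod⟩
  exact absurd hle (not_le.mpr (Nat.mod_lt t ppos))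

lemma cperiod_dvd_n (c : ZMod n → F) : cperiod c ∣ n :=
  cperiod_dvd (by simpa using cshift_iter_mul_n 1 c)

lemma cperiod_smul (a : Fˣ) (c : ZMod n → F) : cperiod ((a : F) • c) = cperiod c := by
  have hinj : Function.Injective (fun x : ZMod n → F => (a : F) • x) :=
    smul_right_injective _ a.ne_zero
  unfold cperiod
  congr 1
  ext t
  simp only [Set.mem_setOf_eq, cshift_iter_smul]
  exact and_congr_right fun _ => hinj.eq_iff

lemma cperiod_cshift_iter (i : ℕ) (c : ZMod n → F) : cperiod (cshift^[i] c) = cperiod c := by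
  unfold cperiod
  congr 1
  ext t
  simp only [Set.mem_setOf_eq]
  refine and_congr_right fun _ => ?_
  rw [← Function.iterate_add_apply, show t + i = i + t from Nat.add_comm t i,
    Function.iterate_add_apply]
  exact (cshift_iter_inj i).eq_iff

lemma hwt_smul (a : Fˣ) (c : ZMod n → F) : hwt ((a : F) • c) = hwt c := by
  unfold hwt
  congr 1
  ext j
  simp [Pi.smul_apply, smul_eq_mul, a.ne_zero]

lemma hwt_cshift (c : ZMod n → F) : hwt (cshift c) = hwt c := by
  unfold hwt
  have himg : {i : ZMod n | cshift c i ≠ 0} = (· + 1) '' {i : ZMod n | c i ≠ 0} := by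
    ext i
    simp only [Set.mem_image, Set.mem_setOf_eq, cshift_apply]
    constructor
    · intro h
      exact ⟨i - 1, h, by ring⟩
    · rintro ⟨j, hj, rfl⟩
      simpa using hj
  rw [himg, Set.ncard_image_of_injective _ (add_left_injective 1)]

lemma hwt_cshift_iter (i : ℕ) (c : ZMod n → F) : hwt (cshift^[i] c) = hwt c := by
  induction i with
  | zero => rfl
  | succ i ih => rw [Function.iterate_succ_apply', hwt_cshift, ih]

/-- The relation: `d` is a nonzero scalar multiple of a shift of `c`. -/
def shiftRel {F : Type*} [Field F] {n : ℕ} (c d : ZMod n → F) : Prop :=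
  ∃ (i : ℕ) (a : Fˣ), d = (a : F) • cshift^[i] c

lemma shiftRel_refl (c : ZMod n → F) : shiftRel c c := ⟨0, 1, by simp⟩

lemma shiftRel_trans {c d e : ZMod n → F} (h1 : shiftRel c d) (h2 : shiftRel d e) :
    shiftRel c e := by
  obtain ⟨i, a, rfl⟩ := h1
  obtain ⟨j, b, rfl⟩ := h2
  refine ⟨j + i, b * a, ?_⟩
  rw [Function.iterate_add_apply, cshift_iter_smul, smul_smul, Units.val_mul]

lemma shiftRel_symm {c d : ZMod n → F} (h : shiftRel c d) : shiftRel d c := by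
  obtain ⟨i, a, rfl⟩ := h
  set j := n * (i / n + 1) - i with hj
  have hnpos : 0 < n := Nat.pos_of_ne_zero (NeZero.ne n)
  have h2 : n * (i / n) + i % n = i := Nat.div_add_mod i n
  have h3 : n * (i / n + 1) = n * (i / n) + n := by ring
  have hmod : i % n < n := Nat.mod_lt i hnpos
  have hij : j + i = n * (i / n + 1) := by omega
  refine ⟨j, a⁻¹, ?_⟩
  rw [cshift_iter_smul, ← Function.iterate_add_apply, hij, cshift_iter_mul_n, smul_smul]
  simp

/-- The size of the class of a nonzero word is a positive multiple of
`lcm (cperiod c) (card Fˣ)`. -/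
lemma class_card [Fintype F] (c : ZMod n → F) (hc : c ≠ 0) :
    Nat.lcm (cperiod c) (Nat.card Fˣ) ∣ {d : ZMod n → F | shiftRel c d}.ncard ∧
      0 < {d : ZMod n → F | shiftRel c d}.ncard := by
  classical
  have hnpos : 0 < n := Nat.pos_of_ne_zero (NeZero.ne n)
  set U := {i : ℕ | 0 < i ∧ ∃ a : Fˣ, cshift^[i] c = (a : F) • c} with hU
  have hUne : U.Nonempty := ⟨n, hnpos, 1, by simpa using cshift_iter_mul_n 1 c⟩
  obtain ⟨u, huU, humin⟩ : ∃ u : ℕ, (0 < u ∧ ∃ a : Fˣ, cshift^[u] c = (a : F) • c) ∧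
      ∀ i : ℕ, (0 < i ∧ ∃ a : Fˣ, cshift^[i] c = (a : F) • c) → u ≤ i :=
    ⟨sInf U, Nat.sInf_mem hUne, fun i hi => Nat.sInf_le hi⟩
  obtain ⟨hupos, a0, ha0⟩ := huU
  have hmul : ∀ k : ℕ, cshift^[u * k] c = ((a0 ^ k : Fˣ) : F) • c := by
    intro k
    induction k with
    | zero => simp
    | succ k ih =>
      rw [Nat.mul_succ, Function.iterate_add_apply, ha0, cshift_iter_smul, ih, smul_smul,
        pow_succ, Units.val_mul]
      ring_nf
  have hmin : ∀ i : ℕ, 0 < i → i < u → ∀ a : Fˣ, cshift^[i] c ≠ (a : F) • c := by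
    intro i h1 h2 a h
    exact absurd (humin i ⟨h1, a, h⟩) (not_le.mpr h2)
  set ψ : Fin u × Fˣ → (ZMod n → F) := fun p => ((p.2 : F)) • cshift^[(p.1 : ℕ)] c with hψ
  have key : ∀ (r s : Fin u) (a b : Fˣ), (r : ℕ) ≤ (s : ℕ) →
      (a : F) • cshift^[(r : ℕ)] c = (b : F) • cshift^[(s : ℕ)] c → r = s ∧ a = b := by
    intro r s a b hrs h
    have hs : (s : ℕ) = ((s : ℕ) - (r : ℕ)) + (r : ℕ) := by omega
    rw [hs, Function.iterate_add_apply] at h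
    have h2 : cshift^[(r : ℕ)] ((a : F) • c) =
        cshift^[(r : ℕ)] (((b : F)) • cshift^[(s : ℕ) - (r : ℕ)] c) := by
      rw [cshift_iter_smul, cshift_iter_smul, h]
      rw [← Function.iterate_add_apply, show ((s : ℕ) - (r : ℕ)) + (r : ℕ)
        = (r : ℕ) + ((s : ℕ) - (r : ℕ)) from Nat.add_comm _ _, Function.iterate_add_apply]
    have h3 : (a : F) • c = (b : F) • cshift^[(s : ℕ) - (r : ℕ)] c := cshift_iter_inj _ h2
    have h4 : cshift^[(s : ℕ) - (r : ℕ)] c = ((b⁻¹ * a : Fˣ) : F) • c := by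
      calc cshift^[(s : ℕ) - (r : ℕ)] c
          = ((b⁻¹ : Fˣ) : F) • (b : F) • cshift^[(s : ℕ) - (r : ℕ)] c := by
            simp [smul_smul]
        _ = ((b⁻¹ : Fˣ) : F) • (a : F) • c := by rw [← h3]
        _ = ((b⁻¹ * a : Fˣ) : F) • c := by rw [smul_smul, Units.val_mul]
    have hsr : (s : ℕ) - (r : ℕ) = 0 := by
      by_contra h0
      exact hmin _ (Nat.pos_of_ne_zero h0) (by omega) _ h4
    have hrs' : r = s := Fin.ext (by omega)
    subst hrs'
    refine ⟨rfl, ?_⟩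
    have hx : cshift^[(r : ℕ)] c ≠ 0 := fun h0 => hc (cshift_iter_inj (r : ℕ)
      (by rw [h0, cshift_iter_zero]))
    obtain ⟨j, hj⟩ := Function.ne_iff.mp hx
    have hab : (a : F) * cshift^[(r : ℕ)] c j = (b : F) * cshift^[(r : ℕ)] c j := by
      have h5 := congrFun h j
      rw [hsr] at h5
      simpa [Pi.smul_apply, smul_eq_mul] using h5
    exact Units.ext (mul_right_cancel₀ hj hab)
  have hψinj : Function.Injective ψ := by
    rintro ⟨r, a⟩ ⟨s, b⟩ h
    simp only [hψ] at h
    rcases le_total (r : ℕ) (s : ℕ) with hle | hle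
    · obtain ⟨h1, h2⟩ := key r s a b hle h
      rw [h1, h2]
    · obtain ⟨h1, h2⟩ := key s r b a hle h.symm
      rw [h1, h2]
  have hrange : {d : ZMod n → F | shiftRel c d} = Set.range ψ := by
    ext d
    simp only [Set.mem_setOf_eq, Set.mem_range, shiftRel]
    constructor
    · rintro ⟨i, a, rfl⟩
      have hiter : cshift^[i] c = ((a0 ^ (i / u) : Fˣ) : F) • cshift^[i % u] c := by
        conv_lhs => rw [show i = i % u + u * (i / u) from (Nat.mod_add_div i u).symm]
        rw [Function.iterate_add_apply, hmul, cshift_iter_smul]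
      refine ⟨(⟨i % u, Nat.mod_lt i hupos⟩, a * a0 ^ (i / u)), ?_⟩
      simp only [hψ]
      rw [hiter, smul_smul, Units.val_mul]
    · rintro ⟨⟨r, a⟩, rfl⟩
      exact ⟨(r : ℕ), a, rfl⟩
  rw [hrange, ← Set.image_univ, Set.ncard_image_of_injective _ hψinj, Set.ncard_univ]
  have hcard : Nat.card (Fin u × Fˣ) = u * Nat.card Fˣ := by
    simp [Nat.card_eq_fintype_card, Fintype.card_prod]
  rw [hcard]
  have hq1 : 0 < Nat.card Fˣ := Nat.card_pos
  constructor
  · refine Nat.lcm_dvd ?_ (dvd_mul_left _ _)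
    refine cperiod_dvd ?_
    rw [hmul (Nat.card Fˣ)]
    have h1 : a0 ^ Nat.card Fˣ = 1 := pow_card_eq_one'
    rw [h1]
    simp
  · positivity

end Aux

/-- If `C` is an `[n,k]_q` cyclic code with exactly `s` nonzero weights, and `B t`
is the number of nonzero codewords of `C` of period exactly `t`, then
`s ≤ Σ_{t|n} B t / lcm(t, q-1) ≤ 1 + Σ_{t|n, t>1} B t / lcm(t, q-1)` in `ℚ`. -/
theorem stmt1 {F : Type*} [Field F] [Fintype F] {n k : ℕ} [NeZero n]
    (q : ℕ) (hq : q = Fintype.card F)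
    (C : Submodule F (ZMod n → F)) (hcyc : ∀ c ∈ C, cshift c ∈ C)
    (hk : Module.finrank F C = k)
    (s : ℕ) (hs : s = Set.ncard {w : ℕ | ∃ c ∈ C, c ≠ 0 ∧ hwt c = w})
    (B : ℕ → ℕ) (hB : ∀ t, B t = Set.ncard {c : ZMod n → F | c ∈ C ∧ c ≠ 0 ∧ cperiod c = t}) :
    (s : ℚ) ≤ ∑ t ∈ n.divisors, (B t : ℚ) / (Nat.lcm t (q - 1)) ∧
      ∑ t ∈ n.divisors, (B t : ℚ) / (Nat.lcm t (q - 1)) ≤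
        1 + ∑ t ∈ n.divisors.filter (fun t => 1 < t), (B t : ℚ) / (Nat.lcm t (q - 1)) := by
  classical
  have hn : 0 < n := Nat.pos_of_ne_zero (NeZero.ne n)
  have hq2 : 2 ≤ q := by rw [hq]; exact Fintype.one_lt_card
  have hqu : Nat.card Fˣ = q - 1 := by
    rw [Nat.card_eq_fintype_card, Fintype.card_units, hq]
  have hq1pos : 0 < q - 1 := by omega
  letI st : Setoid (ZMod n → F) := ⟨shiftRel, ⟨shiftRel_refl, shiftRel_symm, shiftRel_trans⟩⟩
  set S : Finset (ZMod n → F) := Finset.univ.filter (fun c => c ∈ C ∧ c ≠ 0) with hS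
  -- membership preserved along shiftRel
  have hSmem : ∀ c ∈ S, ∀ d, shiftRel c d → d ∈ S := by
    rintro c hc d ⟨i, a, rfl⟩
    simp only [hS, Finset.mem_filter, Finset.mem_univ, true_and] at hc ⊢
    obtain ⟨hcC, hc0⟩ := hc
    have hiterC : ∀ m : ℕ, cshift^[m] c ∈ C := by
      intro m
      induction m with
      | zero => simpa using hcC
      | succ m ih => rw [Function.iterate_succ_apply']; exact hcyc _ ih
    refine ⟨C.smul_mem _ (hiterC i), ?_⟩
    intro h0
    rcases smul_eq_zero.mp h0 with h | h
    · exact a.ne_zero h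
    · exact hc0 (cshift_iter_inj i (by rw [h, cshift_iter_zero]))
  have hperiod_const : ∀ c d : ZMod n → F, shiftRel c d → cperiod d = cperiod c := by
    rintro c d ⟨i, a, rfl⟩
    rw [cperiod_smul, cperiod_cshift_iter]
  have hwt_const : ∀ c d : ZMod n → F, shiftRel c d → hwt d = hwt c := by
    rintro c d ⟨i, a, rfl⟩
    rw [hwt_smul, hwt_cshift_iter]
  -- B t as a Finset card
  have hBcard : ∀ t, B t = (S.filter (fun c => cperiod c = t)).card := by
    intro t
    rw [hB t]
    have hset : {c : ZMod n → F | c ∈ C ∧ c ≠ 0 ∧ cperiod c = t}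
        = ↑(S.filter (fun c => cperiod c = t)) := by
      ext c
      simp [hS, and_assoc]
    rw [hset, Set.ncard_coe_finset]
  have hmaps : ∀ c ∈ S, cperiod c ∈ n.divisors := fun c _ =>
    Nat.mem_divisors.mpr ⟨cperiod_dvd_n c, NeZero.ne n⟩
  -- rewrite the divisor sum as a sum over codewords
  have hsum1 : ∑ t ∈ n.divisors, (B t : ℚ) / (Nat.lcm t (q - 1)) =
      ∑ c ∈ S, (1 : ℚ) / (Nat.lcm (cperiod c) (q - 1)) := by
    rw [← Finset.sum_fiberwise_of_maps_to hmaps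
      (fun c => (1 : ℚ) / (Nat.lcm (cperiod c) (q - 1)))]
    refine Finset.sum_congr rfl fun t ht => ?_
    have hcong : ∀ c ∈ S.filter (fun c => cperiod c = t),
        (1 : ℚ) / (Nat.lcm (cperiod c) (q - 1)) = 1 / (Nat.lcm t (q - 1)) := by
      intro c hc
      rw [(Finset.mem_filter.mp hc).2]
    rw [Finset.sum_congr rfl hcong, Finset.sum_const, hBcard t, nsmul_eq_mul, mul_one_div]
  set I : Finset (Quotient st) := S.image (Quotient.mk st) with hI
  -- each fiber contributes at least 1
  have hfibers : ∀ ω ∈ I, (1 : ℚ) ≤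
      ∑ c ∈ S.filter (fun c => Quotient.mk st c = ω),
        (1 : ℚ) / (Nat.lcm (cperiod c) (q - 1)) := by
    intro ω hω
    obtain ⟨c₀, hc₀S, hc₀⟩ := Finset.mem_image.mp hω
    have hc₀' := Finset.mem_filter.mp hc₀S
    have hc0ne : c₀ ≠ 0 := hc₀'.2.2
    have htpos : 0 < cperiod c₀ := (cperiod_mem c₀).1
    have hfibmem : ∀ d : ZMod n → F,
        d ∈ S.filter (fun c => Quotient.mk st c = ω) ↔ shiftRel c₀ d := by
      intro d
      rw [Finset.mem_filter]
      constructor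
      · rintro ⟨hdS, hdω⟩
        have hdc : Quotient.mk st d = Quotient.mk st c₀ := hdω.trans hc₀.symm
        exact shiftRel_symm (Quotient.eq.mp hdc)
      · intro hrel
        exact ⟨hSmem c₀ hc₀S d hrel,
          (Quotient.sound (shiftRel_symm hrel : shiftRel d c₀)).trans hc₀⟩
    have hconst : ∀ d ∈ S.filter (fun c => Quotient.mk st c = ω),
        (1 : ℚ) / (Nat.lcm (cperiod d) (q - 1)) = 1 / (Nat.lcm (cperiod c₀) (q - 1)) := by
      intro d hd
      rw [hperiod_const c₀ d ((hfibmem d).mp hd)]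
    rw [Finset.sum_congr rfl hconst, Finset.sum_const, nsmul_eq_mul, mul_one_div]
    have hLpos : (0 : ℚ) < ((Nat.lcm (cperiod c₀) (q - 1) : ℕ) : ℚ) := by
      have := Nat.pos_of_ne_zero (Nat.lcm_ne_zero htpos.ne' hq1pos.ne')
      exact_mod_cast this
    rw [one_le_div hLpos]
    have hcc := class_card c₀ hc0ne
    rw [hqu] at hcc
    have hle : Nat.lcm (cperiod c₀) (q - 1) ≤ {d : ZMod n → F | shiftRel c₀ d}.ncard :=
      Nat.le_of_dvd hcc.2 hcc.1
    have hcoe : ↑(S.filter (fun c => Quotient.mk st c = ω))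
        = {d : ZMod n → F | shiftRel c₀ d} := by
      ext d
      rw [Finset.mem_coe, hfibmem d]
      rfl
    have hcardeq : (S.filter (fun c => Quotient.mk st c = ω)).card
        = {d : ZMod n → F | shiftRel c₀ d}.ncard := by
      rw [← hcoe, Set.ncard_coe_finset]
    rw [hcardeq]
    exact_mod_cast hle
  have hsum2 : (I.card : ℚ) ≤ ∑ c ∈ S, (1 : ℚ) / (Nat.lcm (cperiod c) (q - 1)) := by
    rw [← Finset.sum_fiberwise_of_maps_to (fun c hc => Finset.mem_image_of_mem (Quotient.mk st) hc)
      (fun c => (1 : ℚ) / (Nat.lcm (cperiod c) (q - 1)))]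
    calc (I.card : ℚ) = ∑ _ω ∈ I, (1 : ℚ) := by rw [Finset.sum_const, nsmul_eq_mul, mul_one]
      _ ≤ _ := Finset.sum_le_sum hfibers
  -- s is at most the number of classes
  have hwtS : s = (S.image hwt).card := by
    rw [hs]
    have hset : {w : ℕ | ∃ c ∈ C, c ≠ 0 ∧ hwt c = w} = ↑(S.image hwt) := by
      ext w
      simp only [Set.mem_setOf_eq, Finset.coe_image, Set.mem_image, Finset.mem_coe,
        Finset.mem_filter, Finset.mem_univ, true_and, hS]
      constructor
      · rintro ⟨c, hcC, hc0, rfl⟩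
        exact ⟨c, ⟨hcC, hc0⟩, rfl⟩
      · rintro ⟨c, ⟨hcC, hc0⟩, rfl⟩
        exact ⟨c, hcC, hc0, rfl⟩
    rw [hset, Set.ncard_coe_finset]
  have hsI : s ≤ I.card := by
    rw [hwtS]
    have hlift : S.image hwt
        = I.image (Quotient.lift hwt (fun a b hab => (hwt_const a b hab).symm)) := by
      rw [hI, Finset.image_image]
      rfl
    rw [hlift]
    exact Finset.card_image_le
  constructor
  · rw [hsum1]
    exact le_trans (by exact_mod_cast hsI) hsum2
  · rw [← Finset.sum_filter_add_sum_filter_not n.divisors (fun t => 1 < t)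
      (fun t => (B t : ℚ) / (Nat.lcm t (q - 1)))]
    have hfilter1 : n.divisors.filter (fun t => ¬ 1 < t) = {1} := by
      ext t
      simp only [Finset.mem_filter, Nat.mem_divisors, Finset.mem_singleton, not_lt]
      constructor
      · rintro ⟨⟨hdvd, hn0⟩, hle⟩
        have ht0 : t ≠ 0 := by
          rintro rfl
          exact hn0 (zero_dvd_iff.mp hdvd)
        omega
      · rintro rfl
        exact ⟨⟨one_dvd n, NeZero.ne n⟩, le_refl 1⟩
    rw [hfilter1, Finset.sum_singleton, Nat.lcm_one_left]
    -- B 1 ≤ q - 1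
    have hconst1 : ∀ c ∈ S.filter (fun c => cperiod c = 1), ∀ j : ZMod n, c j = c 0 := by
      intro c hc j
      obtain ⟨hcS, hper⟩ := Finset.mem_filter.mp hc
      have hsh : cshift c = c := by
        have h1 := (cperiod_mem c).2
        rw [hper] at h1
        simpa using h1
      have hstep : ∀ j : ZMod n, c j = c (j - 1) := fun j => (congrFun hsh j).symm
      have hk' : ∀ m : ℕ, c ((m : ℕ) : ZMod n) = c 0 := by
        intro m
        induction m with
        | zero => norm_num
        | succ m ih =>
          rw [show ((m + 1 : ℕ) : ZMod n) = ((m : ℕ) : ZMod n) + 1 by push_cast; ring,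
            hstep (((m : ℕ) : ZMod n) + 1)]
          simpa using ih
      calc c j = c ((j.val : ℕ) : ZMod n) := by rw [ZMod.natCast_rightInverse j]
        _ = c 0 := hk' j.val
    have hB1 : B 1 ≤ q - 1 := by
      rw [hBcard 1]
      refine le_trans (Finset.card_le_card_of_injOn (t := Finset.univ.erase (0 : F)) (fun c => c 0) ?_ ?_) ?_
      · intro c hc
        refine Finset.mem_erase.mpr ⟨?_, Finset.mem_univ _⟩
        intro h0
        have hcS := (Finset.mem_filter.mp hc).1
        have hcne : c ≠ 0 := (Finset.mem_filter.mp hcS).2.2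
        exact hcne (funext fun j => by rw [hconst1 c hc j]; exact h0)
      · intro c hc d hd h
        funext j
        rw [hconst1 c (Finset.mem_coe.mp hc) j, hconst1 d (Finset.mem_coe.mp hd) j]
        exact h
      · rw [Finset.card_erase_of_mem (Finset.mem_univ (0 : F)), Finset.card_univ, hq]
    have hle1 : (B 1 : ℚ) / ((q - 1 : ℕ) : ℚ) ≤ 1 := by
      rw [div_le_one (by exact_mod_cast hq1pos)]
      exact_mod_cast hB1
    linarith
end

section
/- Let C be a strongly cyclic code of length n and dimension k over F_q with exactly s distinct nonzero weights. Then s ≤ (q^k − 1) / lcm(q−1, n). -/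
@[to_additive]
theorem MulAction.card_dvd_card_of_isCancelSMul (G X : Type*) [Group G] [MulAction G X]
    [IsCancelSMul G X] : Nat.card G ∣ Nat.card X := by
  rw [Nat.card_congr (selfEquivOrbitsQuotientProd (G := G) (X := X)
    IsCancelSMul.stabilizer_eq_bot), Nat.card_prod]
  exact Nat.dvd_mul_left _ _

@[to_additive]
theorem MulAction.card_dvd_ncard_of_free {G X : Type*} [Group G] [MulAction G X] {s : Set X}
    (hs : ∀ g : G, ∀ x ∈ s, g • x ∈ s) (hfree : ∀ g : G, ∀ x ∈ s, g • x = x → g = 1) :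
    Nat.card G ∣ s.ncard := by
  let S : SubMulAction G X := ⟨s, fun g x ↦ hs g x⟩
  have : IsCancelSMul G S := isCancelSMul_iff_eq_one_of_smul_eq.mpr
    fun g x hx ↦ hfree g x x.2 (congrArg Subtype.val hx)
  exact card_dvd_card_of_isCancelSMul G S

theorem hwt_comp_equiv {ι F : Type*} [Zero F] (c : ι → F) (σ : ι ≃ ι) : hwt (c ∘ σ) = hwt c :=
  Set.ncard_preimage_of_injective_subset_range (s := {i | c i ≠ 0}) σ.injective (by simp)

theorem hwt_smul_s2 {ι G F : Type*} [Group G] [AddMonoid F] [DistribMulAction G F] (g : G)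
    (c : ι → F) : hwt (g • c) = hwt c := by
  simp only [hwt, Pi.smul_apply, ne_eq, smul_eq_zero_iff_eq]

theorem hwt_vadd {ι F : Type*} [AddGroup ι] [Zero F] (j : ιᵈᵃᵃ) (c : ι → F) :
    hwt (j +ᵥ c) = hwt c :=
  hwt_comp_equiv c (Equiv.addLeft (DomAddAct.mk.symm j))

section
variable {F : Type*} {n : ℕ}

/- `(ZMod n)ᵈᵃᵃ` acts on words by `(DomAddAct.mk j +ᵥ c) i = c (j + i)`; this realises the
shifts as a group action. -/
theorem cshift_eq_vadd :
    (cshift : (ZMod n → F) → ZMod n → F) = (DomAddAct.mk (-1 : ZMod n) +ᵥ ·) := by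
  funext c i
  simp only [cshift, DomAddAct.vadd_apply, Equiv.symm_apply_apply, vadd_eq_add, sub_eq_neg_add]

theorem cshift_iterate (c : ZMod n → F) (t : ℕ) :
    cshift^[t] c = DomAddAct.mk (-(t : ZMod n)) +ᵥ c := by
  rw [cshift_eq_vadd, vadd_iterate_apply, ← DomAddAct.mk_nsmul, smul_neg, nsmul_one]

theorem vadd_eq_cshift_iterate [NeZero n] (j : ZMod n) (c : ZMod n → F) :
    DomAddAct.mk j +ᵥ c = cshift^[(-j).val] c := by
  rw [cshift_iterate, ZMod.natCast_zmod_val, neg_neg]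

theorem eq_zero_of_vadd_eq_self [NeZero n] {c : ZMod n → F} (hc : cperiod c = n) {j : ZMod n}
    (h : DomAddAct.mk j +ᵥ c = c) : j = 0 := by
  rw [vadd_eq_cshift_iterate] at h
  suffices (-j).val = 0 by simpa using this
  by_contra ht
  have hle : cperiod c ≤ (-j).val := Nat.sInf_le ⟨Nat.pos_of_ne_zero ht, h⟩
  have hlt := ZMod.val_lt (-j)
  omega

end

def weightClass {ι F : Type*} [Semiring F] (C : Submodule F (ι → F)) (w : ℕ) : Set (ι → F) :=
  {c | c ∈ C ∧ c ≠ 0 ∧ hwt c = w}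

theorem card_units_dvd_ncard_weightClass {ι F : Type*} [DivisionRing F]
    (C : Submodule F (ι → F)) (w : ℕ) : Nat.card Fˣ ∣ (weightClass C w).ncard := by
  refine MulAction.card_dvd_ncard_of_free ?_ ?_
  · rintro α c ⟨hcC, hc0, hcw⟩
    exact ⟨C.smul_of_tower_mem α hcC, (smul_ne_zero_iff_ne α).mpr hc0, (hwt_smul_s2 α c).trans hcw⟩
  · rintro α c ⟨-, hc0, -⟩ h
    rw [Units.smul_def, ← one_smul F c, smul_smul, mul_one] at h
    exact Units.val_eq_one.mp (smul_left_injective F hc0 h)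

theorem dvd_ncard_weightClass {F : Type*} [Semiring F] {n : ℕ} [NeZero n]
    (C : Submodule F (ZMod n → F))
    (hcyc : ∀ c ∈ C, cshift c ∈ C) (hstrong : ∀ c ∈ C, c ≠ 0 → cperiod c = n) (w : ℕ) :
    n ∣ (weightClass C w).ncard := by
  have hcard : Nat.card (ZMod n)ᵈᵃᵃ = n := by
    rw [Nat.card_congr DomAddAct.mk.symm, Nat.card_zmod]
  refine (dvd_of_eq hcard.symm).trans (AddAction.card_dvd_ncard_of_free ?_ ?_)
  · rintro j c ⟨hcC, hc0, hcw⟩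
    obtain ⟨j, rfl⟩ := DomAddAct.mk.surjective j
    refine ⟨?_, fun h ↦ hc0 ?_, (hwt_vadd _ c).trans hcw⟩
    · rw [vadd_eq_cshift_iterate]
      exact Set.MapsTo.iterate hcyc _ hcC
    · exact vadd_left_cancel (DomAddAct.mk j) (h.trans rfl)
  · rintro j c ⟨hcC, hc0, -⟩ h
    obtain ⟨j, rfl⟩ := DomAddAct.mk.surjective j
    rw [eq_zero_of_vadd_eq_self (hstrong c hcC hc0) h]
    rfl

theorem lcm_le_ncard_weightClass {F : Type*} [DivisionRing F] [Fintype F] {n : ℕ} [NeZero n]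
    (C : Submodule F (ZMod n → F))
    (hcyc : ∀ c ∈ C, cshift c ∈ C) (hstrong : ∀ c ∈ C, c ≠ 0 → cperiod c = n) {w : ℕ}
    (hw : (weightClass C w).Nonempty) :
    Nat.lcm (Fintype.card F - 1) n ≤ (weightClass C w).ncard := by
  refine Nat.le_of_dvd ((Set.ncard_pos (Set.toFinite _)).mpr hw) (Nat.lcm_dvd ?_ ?_)
  · rw [← Nat.card_eq_fintype_card, ← Nat.card_units]
    exact card_units_dvd_ncard_weightClass C w
  · exact dvd_ncard_weightClass C hcyc hstrong w

/-- If `C` is an `[n,k]_q` strongly cyclic code (every nonzero codeword has period `n`)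
with exactly `s` nonzero weights, then `s ≤ (q^k - 1) / lcm(q-1, n)`. -/
theorem stmt2 {F : Type*} [Field F] [Fintype F] {n k : ℕ} [NeZero n]
    (q : ℕ) (hq : q = Fintype.card F)
    (C : Submodule F (ZMod n → F)) (hcyc : ∀ c ∈ C, cshift c ∈ C)
    (hstrong : ∀ c ∈ C, c ≠ 0 → cperiod c = n)
    (hk : Module.finrank F C = k)
    (s : ℕ) (hs : s = Set.ncard {w : ℕ | ∃ c ∈ C, c ≠ 0 ∧ hwt c = w}) :
    (s : ℚ) ≤ ((q : ℚ) ^ k - 1) / (Nat.lcm (q - 1) n) := by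
  classical
  subst hq hk hs
  set L := Nat.lcm (Fintype.card F - 1) n
  set N : Finset (ZMod n → F) := ((C : Set (ZMod n → F)) \ {0}).toFinset
  have hN : N.card = Fintype.card F ^ Module.finrank F C - 1 := by
    rw [← Set.ncard_eq_toFinset_card', Set.ncard_sdiff_singleton_of_mem C.zero_mem,
      ← Nat.card_coe_set_eq, SetLike.coe_sort_coe, Nat.card_eq_fintype_card (α := C),
      Module.card_eq_pow_finrank (K := F) (V := C)]
  have hfiber (w : ℕ) : (↑{c ∈ N | hwt c = w} : Set (ZMod n → F)) = weightClass C w := by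
    ext c; simp [N, weightClass, and_assoc]
  have hweights : {w : ℕ | ∃ c ∈ C, c ≠ 0 ∧ hwt c = w} = ↑(N.image hwt) := by
    ext w; simp [N, and_assoc]
  have hcount : L * (N.image hwt).card ≤ N.card := by
    refine Finset.mul_card_image_le_card N L fun w hw ↦ ?_
    obtain ⟨c, hc, rfl⟩ := Finset.mem_image.mp hw
    rw [← Set.ncard_coe_finset, hfiber]
    exact lcm_le_ncard_weightClass C hcyc hstrong ⟨c, by simpa [N, weightClass] using hc⟩
  have hL : (0 : ℚ) < L := by
    exact_mod_cast Nat.lcm_pos (Nat.sub_pos_of_lt Fintype.one_lt_card) (NeZero.pos n)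
  have hC : 1 ≤ Fintype.card F ^ Module.finrank F C := Nat.one_le_pow _ _ Fintype.card_pos
  rw [hweights, Set.ncard_coe_finset, le_div_iff₀ hL, mul_comm]
  exact_mod_cast hN ▸ hcount
end

section
/- Let C be a cyclic code of length n and dimension k over F_q with exactly s distinct nonzero weights. Then, as real numbers, s ≤ 1 + (q^k − 1) · ( Σ_{t | n, t > 1} 1 / lcm(t, q−1)^2 )^{1/2}. -/
open MulAction

theorem MulAction.index_comap_stabilizer_dvd_ncard_orbit {G H X : Type*} [CommGroup G] [Group H]
    [MulAction G X] (f : H →* G) (x : X) :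
    ((stabilizer G x).comap f).index ∣ (orbit G x).ncard := by
  rw [Subgroup.index_comap, ← index_stabilizer]
  exact Subgroup.relIndex_dvd_index_of_normal _ _

open Finset in
theorem Finset.card_image_mul_le_card_of_le_ncard_orbit {G X Y : Type*} [Group G] [MulAction G X]
    [DecidableEq Y] {s : Finset X} {f : X → Y} (hs : ∀ g : G, ∀ x ∈ s, g • x ∈ s)
    (hf : ∀ (g : G) x, f (g • x) = f x) {L : ℕ} (hL : ∀ x ∈ s, L ≤ (orbit G x).ncard) :
    #(s.image f) * L ≤ #s := by
  rw [mul_comm]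
  refine mul_card_image_le_card_of_maps_to (fun x hx => mem_image_of_mem f hx) L fun y hy => ?_
  obtain ⟨x, hx, rfl⟩ := mem_image.mp hy
  calc L ≤ (orbit G x).ncard := hL x hx
    _ ≤ ((s.filter fun z => f z = f x : Finset X) : Set X).ncard := by
        refine Set.ncard_le_ncard ?_ (Finset.finite_toSet _)
        rintro _ ⟨g, rfl⟩
        simp [hs g x hx, hf]
    _ = _ := Set.ncard_coe_finset _

theorem Finset.sum_mul_le_sum_mul_sqrt_sum_sq {ι : Type*} (s : Finset ι) {a : ι → ℝ}
    (ha : ∀ i ∈ s, 0 ≤ a i) (b : ι → ℝ) :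
    ∑ i ∈ s, a i * b i ≤ (∑ i ∈ s, a i) * √(∑ i ∈ s, b i ^ 2) := by
  rw [sum_mul]
  refine sum_le_sum fun i hi => mul_le_mul_of_nonneg_left ?_ (ha i hi)
  exact (le_abs_self _).trans (Real.abs_le_sqrt
    (single_le_sum (f := fun j => b j ^ 2) (fun j _ => sq_nonneg (b j)) hi))

theorem cshift_iterate_s3 {F : Type*} {n : ℕ} (j : ℕ) (c : ZMod n → F) :
    cshift^[j] c = fun i => c (i - j) := by
  induction j with
  | zero => simp
  | succ j ih =>
    funext i
    rw [Function.iterate_succ_apply', ih, cshift]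
    push_cast
    ring_nf

abbrev ShiftScale (n : ℕ) (F : Type*) [Field F] : Type _ := Multiplicative (ZMod n) × Fˣ

namespace ShiftScale

variable {F : Type*} [Field F] {n : ℕ}

instance : SMul (ShiftScale n F) (ZMod n → F) :=
  ⟨fun g c i => (g.2 : F) * c (i - g.1.toAdd)⟩

theorem smul_apply (g : ShiftScale n F) (c : ZMod n → F) (i : ZMod n) :
    (g • c) i = (g.2 : F) * c (i - g.1.toAdd) := rfl

instance : DistribMulAction (ShiftScale n F) (ZMod n → F) where
  one_smul c := funext fun i => by simp [smul_apply]
  mul_smul g h c := funext fun i => by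
    simp only [smul_apply, Prod.fst_mul, Prod.snd_mul, Units.val_mul, toAdd_mul, mul_assoc,
      sub_sub]
  smul_zero g := funext fun i => by simp [smul_apply]
  smul_add g c d := funext fun i => by simp [smul_apply, mul_add]

theorem smul_eq_smul_cshift_iterate [NeZero n] (g : ShiftScale n F) (c : ZMod n → F) :
    g • c = (g.2 : F) • cshift^[g.1.toAdd.val] c := by
  rw [cshift_iterate_s3, ZMod.natCast_zmod_val]
  rfl

theorem smul_mem [NeZero n] {C : Submodule F (ZMod n → F)} (hC : ∀ c ∈ C, cshift c ∈ C)
    (g : ShiftScale n F) {c : ZMod n → F} (hc : c ∈ C) : g • c ∈ C := by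
  rw [smul_eq_smul_cshift_iterate]
  exact C.smul_mem _ (Set.MapsTo.iterate hC _ hc)

theorem hwt_smul (g : ShiftScale n F) (c : ZMod n → F) : hwt (g • c) = hwt c := by
  have : {i | (g • c) i ≠ 0} = (· + g.1.toAdd) '' {i | c i ≠ 0} := by
    ext i
    simp [smul_apply, sub_eq_add_neg]
  rw [hwt, hwt, this, Set.ncard_image_of_injective _ (add_left_injective _)]

end ShiftScale

section Period

variable {F : Type*} [Field F] {n : ℕ}

/-- The least `t > 0` with `c (i + t) = c i` for all `i`. -/
noncomputable def shiftPeriod (c : ZMod n → F) : ℕ :=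
  ((stabilizer (ShiftScale n F) c).comap (MonoidHom.inl (Multiplicative (ZMod n)) Fˣ)).index

theorem shiftPeriod_smul (g : ShiftScale n F) (c : ZMod n → F) :
    shiftPeriod (g • c) = shiftPeriod c := by
  rw [shiftPeriod, shiftPeriod, stabilizer_smul_eq_right]

theorem shiftPeriod_dvd [NeZero n] (c : ZMod n → F) : shiftPeriod c ∣ n := by
  simpa [shiftPeriod, Nat.card_zmod] using Subgroup.index_dvd_card
    ((stabilizer (ShiftScale n F) c).comap (MonoidHom.inl (Multiplicative (ZMod n)) Fˣ))

theorem shiftPeriod_ne_zero [NeZero n] (c : ZMod n → F) : shiftPeriod c ≠ 0 :=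
  Subgroup.index_ne_zero_of_finite

theorem eq_const_of_shiftPeriod_eq_one {c : ZMod n → F} (h : shiftPeriod c = 1) (i : ZMod n) :
    c i = c 0 := by
  rw [shiftPeriod, Subgroup.index_eq_one] at h
  have hi : MonoidHom.inl _ Fˣ (Multiplicative.ofAdd i) ∈ stabilizer (ShiftScale n F) c :=
    Subgroup.mem_comap.mp (h ▸ Subgroup.mem_top _)
  simpa [ShiftScale.smul_apply] using (congrFun hi i).symm

theorem hwt_eq_of_shiftPeriod_eq_one [NeZero n] {c : ZMod n → F} (hc : c ≠ 0)
    (h : shiftPeriod c = 1) : hwt c = n := by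
  obtain ⟨j, hj⟩ := Function.ne_iff.mp hc
  have : {i | c i ≠ 0} = Set.univ := Set.eq_univ_of_forall fun i => by
    simpa [eq_const_of_shiftPeriod_eq_one h i, eq_const_of_shiftPeriod_eq_one h j] using hj
  rw [hwt, this, Set.ncard_univ, Nat.card_zmod]

theorem card_sub_one_dvd_ncard_orbit [Fintype F] {c : ZMod n → F} (hc : c ≠ 0) :
    Fintype.card F - 1 ∣ (orbit (ShiftScale n F) c).ncard := by
  obtain ⟨j, hj⟩ := Function.ne_iff.mp hc
  have hfree : (stabilizer (ShiftScale n F) c).comap (MonoidHom.inr _ Fˣ) = ⊥ := by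
    refine (Subgroup.eq_bot_iff_forall _).mpr fun u hu => Units.ext ?_
    have := congrFun (Subgroup.mem_comap.mp hu) j
    simp only [ShiftScale.smul_apply, MonoidHom.inr_apply, toAdd_one, sub_zero] at this
    simpa using mul_right_cancel₀ hj (this.trans (one_mul _).symm)
  have := index_comap_stabilizer_dvd_ncard_orbit (MonoidHom.inr (Multiplicative (ZMod n)) Fˣ) c
  rwa [hfree, Subgroup.index_bot, Nat.card_units, Nat.card_eq_fintype_card] at this

theorem lcm_shiftPeriod_le_ncard_orbit [Fintype F] [NeZero n] {c : ZMod n → F} (hc : c ≠ 0) :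
    Nat.lcm (shiftPeriod c) (Fintype.card F - 1) ≤ (orbit (ShiftScale n F) c).ncard :=
  Nat.le_of_dvd ((Set.ncard_pos (Set.toFinite _)).mpr ⟨c, mem_orbit_self c⟩)
    (Nat.lcm_dvd (index_comap_stabilizer_dvd_ncard_orbit _ c) (card_sub_one_dvd_ncard_orbit hc))

end Period

section Counting

open Finset

variable {F : Type*} [Field F] [Fintype F] {n : ℕ} [NeZero n]

open Classical in
noncomputable def nonzeroOfPeriod (C : Submodule F (ZMod n → F)) (t : ℕ) :
    Finset (ZMod n → F) :=
  {c | c ∈ C ∧ c ≠ 0 ∧ shiftPeriod c = t}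

theorem mem_nonzeroOfPeriod {C : Submodule F (ZMod n → F)} {t : ℕ} {c : ZMod n → F} :
    c ∈ nonzeroOfPeriod C t ↔ c ∈ C ∧ c ≠ 0 ∧ shiftPeriod c = t := by
  simp [nonzeroOfPeriod]

theorem card_image_hwt_nonzeroOfPeriod_mul_le {C : Submodule F (ZMod n → F)}
    (hC : ∀ c ∈ C, cshift c ∈ C) (t : ℕ) :
    #((nonzeroOfPeriod C t).image hwt) * Nat.lcm t (Fintype.card F - 1) ≤
      #(nonzeroOfPeriod C t) := by
  refine card_image_mul_le_card_of_le_ncard_orbit (G := ShiftScale n F) ?_ ShiftScale.hwt_smul ?_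
  · intro g c hc
    obtain ⟨hcC, hc0, hct⟩ := mem_nonzeroOfPeriod.mp hc
    exact mem_nonzeroOfPeriod.mpr ⟨ShiftScale.smul_mem hC g hcC,
      (smul_ne_zero_iff_ne g).mpr hc0, by rw [shiftPeriod_smul, hct]⟩
  · intro c hc
    obtain ⟨-, hc0, rfl⟩ := mem_nonzeroOfPeriod.mp hc
    exact lcm_shiftPeriod_le_ncard_orbit hc0

theorem sum_card_nonzeroOfPeriod_lt (C : Submodule F (ZMod n → F)) (D : Finset ℕ) :
    ∑ t ∈ D, #(nonzeroOfPeriod C t) < Fintype.card F ^ Module.finrank F C := by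
  classical
  have hfiber : ∀ t, nonzeroOfPeriod C t = ({c | c ∈ C ∧ c ≠ 0} : Finset _).filter
      (shiftPeriod · = t) := fun t => by
    ext c
    simp [mem_nonzeroOfPeriod, and_assoc]
  calc ∑ t ∈ D, #(nonzeroOfPeriod C t)
      ≤ #({c | c ∈ C ∧ c ≠ 0} : Finset (ZMod n → F)) := by
        simp_rw [hfiber, sum_card_fiberwise_eq_card_filter]
        exact card_filter_le _ _
    _ < #({c | c ∈ C} : Finset (ZMod n → F)) := by
        refine card_lt_card ((ssubset_iff_of_subset fun c => ?_).mpr ⟨0, by simp⟩)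
        simp +contextual
    _ = Fintype.card F ^ Module.finrank F C := by
        rw [← Fintype.card_subtype, ← Module.card_eq_pow_finrank]

theorem ncard_weights_le (C : Submodule F (ZMod n → F)) :
    {w : ℕ | ∃ c ∈ C, c ≠ 0 ∧ hwt c = w}.ncard ≤
      1 + ∑ t ∈ n.divisors.filter (1 < ·), #((nonzeroOfPeriod C t).image hwt) := by
  classical
  calc {w : ℕ | ∃ c ∈ C, c ≠ 0 ∧ hwt c = w}.ncard
      ≤ #(insert n ((n.divisors.filter (1 < ·)).biUnion
          fun t => (nonzeroOfPeriod C t).image hwt)) := by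
        rw [← Set.ncard_coe_finset]
        refine Set.ncard_le_ncard ?_ (Finset.finite_toSet _)
        rintro _ ⟨c, hcC, hc0, rfl⟩
        by_cases h1 : shiftPeriod c = 1
        · simp [hwt_eq_of_shiftPeriod_eq_one hc0 h1]
        · refine mem_insert_of_mem (mem_biUnion.mpr ⟨shiftPeriod c, ?_, ?_⟩)
          · have := shiftPeriod_ne_zero c
            simp only [mem_filter, Nat.mem_divisors]
            exact ⟨⟨shiftPeriod_dvd c, NeZero.ne n⟩, by omega⟩
          · exact mem_image_of_mem _ (mem_nonzeroOfPeriod.mpr ⟨hcC, hc0, rfl⟩)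
    _ ≤ 1 + ∑ t ∈ n.divisors.filter (1 < ·), #((nonzeroOfPeriod C t).image hwt) := by
        rw [add_comm]
        exact (card_insert_le _ _).trans (Nat.add_le_add_right card_biUnion_le 1)

end Counting

open Finset in
/-- If `C` is an `[n,k]_q` cyclic code with exactly `s` nonzero weights, then
`s ≤ 1 + (q^k - 1) · (Σ_{t|n, t>1} 1 / lcm(t, q-1)^2)^{1/2}` as real numbers. -/
theorem stmt3 {F : Type*} [Field F] [Fintype F] {n k : ℕ} [NeZero n]
    (q : ℕ) (hq : q = Fintype.card F)
    (C : Submodule F (ZMod n → F)) (hcyc : ∀ c ∈ C, cshift c ∈ C)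
    (hk : Module.finrank F C = k)
    (s : ℕ) (hs : s = Set.ncard {w : ℕ | ∃ c ∈ C, c ≠ 0 ∧ hwt c = w}) :
    (s : ℝ) ≤ 1 + ((q : ℝ) ^ k - 1) *
      Real.sqrt (∑ t ∈ n.divisors.filter (fun t => 1 < t),
        1 / ((Nat.lcm t (q - 1) : ℝ)) ^ 2) := by
  subst hq hk hs
  set D := n.divisors.filter (fun t => 1 < t)
  have hweights_of_period : ∀ t ∈ D, (#((nonzeroOfPeriod C t).image hwt) : ℝ) ≤
      #(nonzeroOfPeriod C t) * (1 / Nat.lcm t (Fintype.card F - 1)) := by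
    intro t ht
    have hlcm : 0 < Nat.lcm t (Fintype.card F - 1) :=
      Nat.lcm_pos (zero_lt_one.trans (mem_filter.mp ht).2) (Nat.sub_pos_of_lt Fintype.one_lt_card)
    rw [mul_one_div, le_div_iff₀ (by exact_mod_cast hlcm)]
    exact_mod_cast card_image_hwt_nonzeroOfPeriod_mul_le hcyc t
  have hnonzero : (∑ t ∈ D, #(nonzeroOfPeriod C t) : ℝ) + 1 ≤
      Fintype.card F ^ Module.finrank F C := by
    exact_mod_cast sum_card_nonzeroOfPeriod_lt C D
  calc (_ : ℝ) ≤ 1 + ∑ t ∈ D, (#((nonzeroOfPeriod C t).image hwt) : ℝ) := by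
        exact_mod_cast ncard_weights_le C
    _ ≤ 1 + ∑ t ∈ D, (#(nonzeroOfPeriod C t) : ℝ) * (1 / Nat.lcm t (Fintype.card F - 1)) :=
        add_le_add_right (sum_le_sum hweights_of_period) 1
    _ ≤ 1 + (∑ t ∈ D, (#(nonzeroOfPeriod C t) : ℝ)) *
          √(∑ t ∈ D, (1 / Nat.lcm t (Fintype.card F - 1)) ^ 2) := by
        gcongr
        exact sum_mul_le_sum_mul_sqrt_sum_sq D (fun _ _ => Nat.cast_nonneg _) _
    _ ≤ _ := by
        simp_rw [one_div_pow]
        gcongr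
        linarith
end

section
/- Let q be a prime power, k ≥ 1, N a positive integer with N dividing q^k − 1, and n = (q^k − 1)/N, with gcd(n,q) = 1. Let C be an irreducible cyclic code of length n and dimension k over F_q whose check polynomial h has period n. Then the number of distinct nonzero weights s of C satisfies s ≤ N. -/
/-!
The cyclic shift `c ↦ x c mod (x^n - 1)` preserves the code and the weight. If a nonzero
codeword `c = g a` is fixed by the `d`-th shift, then `g h = x^n - 1` divides `(x^d - 1) g a`,
so `h ∣ (x^d - 1) a`; as `deg a < deg h` and `h` is irreducible, `h ∣ x^d - 1`, whence `d ≥ n`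
by the period assumption. So every nonzero codeword has `n` distinct shifts of the same weight,
each weight class of nonzero codewords has at least `n` elements, and with at most `q^k - 1`
nonzero codewords this gives `s n ≤ q^k - 1 = N n`.
-/

open Polynomial

open Finset Function

noncomputable def wordPoly {F : Type*} [Semiring F] (n : ℕ) (c : ZMod n → F) : F[X] :=
  ∑ i ∈ range n, C (c i) * X ^ i

def cycShift {F : Type*} {n : ℕ} (c : ZMod n → F) : ZMod n → F := fun i => c (i - 1)

section Words

variable {F : Type*} {n : ℕ}

lemma coeff_wordPoly [Semiring F] (c : ZMod n → F) (j : ℕ) :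
    (wordPoly n c).coeff j = if j < n then c j else 0 := by
  simp [wordPoly, coeff_X_pow]

@[simp] lemma wordPoly_zero [Semiring F] : wordPoly n (0 : ZMod n → F) = 0 := by
  simp [wordPoly]

lemma wordPoly_injective [Semiring F] [NeZero n] : Injective (wordPoly (F := F) n) := by
  intro c c' hcc
  funext i
  simpa [coeff_wordPoly, ZMod.val_lt] using congrArg (coeff · i.val) hcc

lemma natDegree_wordPoly_lt [Semiring F] [NeZero n] (c : ZMod n → F) :
    (wordPoly n c).natDegree < n := by
  have := NeZero.pos n
  suffices (wordPoly n c).natDegree ≤ n - 1 by omega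
  refine natDegree_le_iff_coeff_eq_zero.mpr fun j hj => ?_
  rw [coeff_wordPoly, if_neg (by omega)]

lemma iterate_cycShift_apply (c : ZMod n → F) (t : ℕ) (i : ZMod n) :
    (cycShift^[t] c) i = c (i - t) := by
  induction t generalizing i with
  | zero => simp
  | succ t ih => rw [iterate_succ_apply', cycShift, ih]; push_cast; ring_nf

lemma isPeriodicPt_cycShift (c : ZMod n → F) : IsPeriodicPt cycShift n c := by
  funext i
  simp [iterate_cycShift_apply]

lemma cycShift_ne_zero [Zero F] {c : ZMod n → F} (hc : c ≠ 0) : cycShift c ≠ 0 := by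
  contrapose! hc
  funext i
  simpa [cycShift] using congrFun hc (i + 1)

lemma hwt_cycShift [Zero F] (c : ZMod n → F) : hwt (cycShift c) = hwt c :=
  Set.ncard_preimage_of_injective_subset_range (f := fun i : ZMod n => i - 1)
    (s := {i | c i ≠ 0}) sub_left_injective fun i _ => ⟨i + 1, add_sub_cancel_right i 1⟩

lemma wordPoly_cycShift [CommRing F] [NeZero n] (c : ZMod n → F) :
    wordPoly n (cycShift c) = X * wordPoly n c - C (c (-1)) * (X ^ n - 1) := by
  obtain ⟨m, rfl⟩ : ∃ m, n = m + 1 := ⟨n - 1, by have := NeZero.pos n; omega⟩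
  have hm : ((m : ℕ) : ZMod (m + 1)) = -1 := by
    rw [eq_neg_iff_add_eq_zero]; exact_mod_cast ZMod.natCast_self (m + 1)
  have hterm (i : ℕ) (a : F) : X * (C a * X ^ i) = C a * X ^ (i + 1) := by ring
  rw [wordPoly, wordPoly, sum_range_succ', mul_sum, sum_range_succ]
  simp only [cycShift, hterm, Nat.cast_add, Nat.cast_one, add_sub_cancel_right, Nat.cast_zero,
    zero_sub, hm]
  ring

lemma X_pow_sub_one_dvd_wordPoly_iterate_cycShift_sub [CommRing F] [NeZero n]
    (c : ZMod n → F) (t : ℕ) :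
    X ^ n - 1 ∣ wordPoly n (cycShift^[t] c) - X ^ t * wordPoly n c := by
  induction t with
  | zero => simp
  | succ t ih =>
    rw [iterate_succ_apply', wordPoly_cycShift]
    convert (ih.mul_left X).sub (dvd_mul_left _ (C ((cycShift^[t] c) (-1)))) using 1
    ring

lemma dvd_wordPoly_cycShift [CommRing F] [NeZero n] {g : F[X]} (hg : g ∣ X ^ n - 1)
    {c : ZMod n → F} (hc : g ∣ wordPoly n c) : g ∣ wordPoly n (cycShift c) := by
  rw [wordPoly_cycShift]
  exact (hc.mul_left X).sub (hg.mul_left _)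

end Words

lemma card_image_mul_le_card_of_le_minimalPeriod {α β : Type*} [DecidableEq β] {f : α → α}
    {wt : α → β} (hwt : ∀ x, wt (f x) = wt x) {S : Finset α} (hS : Set.MapsTo f S S)
    {n : ℕ} (hn : ∀ x ∈ S, n ≤ minimalPeriod f x) : #(S.image wt) * n ≤ #S := by
  classical
  rw [card_eq_sum_card_image wt S, ← smul_eq_mul]
  refine card_nsmul_le_sum _ _ _ fun w hw => ?_
  obtain ⟨x, hx, rfl⟩ := mem_image.mp hw
  have horbit : ∀ t, f^[t] x ∈ S ∧ wt (f^[t] x) = wt x := fun t =>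
    ⟨hS.iterate t hx, congrFun (iterate_invariant (funext hwt) t) x⟩
  have hinj : Set.InjOn (f^[·] x) (range n) :=
    iterate_injOn_Iio_minimalPeriod.mono fun t ht => (mem_range.mp ht).trans_le (hn x hx)
  calc n = #((range n).image (f^[·] x)) := by rw [card_image_of_injOn hinj, card_range]
    _ ≤ #{y ∈ S | wt y = wt x} := by
      refine card_le_card fun y hy => ?_
      obtain ⟨t, -, rfl⟩ := mem_image.mp hy
      exact mem_filter.mpr (horbit t)

section CyclicCode

variable {F : Type*} [Field F] {n : ℕ} [NeZero n] {g h : F[X]}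

lemma ne_zero_of_mul_eq_X_pow_sub_one (hgh : g * h = X ^ n - 1) : g * h ≠ 0 := by
  rw [hgh]
  exact X_pow_sub_C_ne_zero (NeZero.pos n) 1

lemma natDegree_add_natDegree_of_mul_eq_X_pow_sub_one (hgh : g * h = X ^ n - 1) :
    g.natDegree + h.natDegree = n := by
  have h0 := ne_zero_of_mul_eq_X_pow_sub_one hgh
  rw [← natDegree_mul (left_ne_zero_of_mul h0) (right_ne_zero_of_mul h0), hgh, ← C_1,
    natDegree_X_pow_sub_C]

lemma dvd_X_pow_sub_one_of_iterate_cycShift_eq (hgh : g * h = X ^ n - 1) (hh : Irreducible h)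
    {c : ZMod n → F} (hc : g ∣ wordPoly n c) (hc0 : c ≠ 0) {d : ℕ}
    (hd : cycShift^[d] c = c) : h ∣ X ^ d - 1 := by
  obtain ⟨a, ha⟩ := hc
  have hg0 : g ≠ 0 := left_ne_zero_of_mul (ne_zero_of_mul_eq_X_pow_sub_one hgh)
  have ha0 : a ≠ 0 := by
    rintro rfl
    exact hc0 (wordPoly_injective (by simp [ha]))
  have hdeg : a.natDegree < h.natDegree := by
    have := natDegree_wordPoly_lt c
    rw [ha, natDegree_mul hg0 ha0] at this
    have := natDegree_add_natDegree_of_mul_eq_X_pow_sub_one hgh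
    omega
  have hdvd : h ∣ (X ^ d - 1) * a := by
    obtain ⟨u, hu⟩ := X_pow_sub_one_dvd_wordPoly_iterate_cycShift_sub c d
    rw [hd, ha, ← hgh] at hu
    refine (mul_dvd_mul_iff_left hg0).mp ⟨-u, ?_⟩
    linear_combination -hu
  exact (hh.prime.dvd_or_dvd hdvd).resolve_right fun ha' =>
    (natDegree_le_of_dvd ha' ha0).not_gt hdeg

lemma le_minimalPeriod_cycShift (hgh : g * h = X ^ n - 1) (hh : Irreducible h)
    (hper : n ∈ lowerBounds {T | 0 < T ∧ h ∣ X ^ T - 1}) {c : ZMod n → F}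
    (hc : g ∣ wordPoly n c) (hc0 : c ≠ 0) : n ≤ minimalPeriod cycShift c :=
  hper ⟨(isPeriodicPt_cycShift c).minimalPeriod_pos (NeZero.pos n),
    dvd_X_pow_sub_one_of_iterate_cycShift_eq hgh hh hc hc0 (isPeriodicPt_minimalPeriod _ _)⟩

lemma ncard_setOf_dvd_wordPoly_le [Fintype F] (hg : g.Monic) (hgh : g * h = X ^ n - 1) :
    {c : ZMod n → F | g ∣ wordPoly n c}.ncard ≤ Fintype.card F ^ h.natDegree := by
  set m := h.natDegree
  have hquot {c : ZMod n → F} (hc : g ∣ wordPoly n c) :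
      g * (wordPoly n c /ₘ g) = wordPoly n c := by
    simpa [(modByMonic_eq_zero_iff_dvd hg).mpr hc] using modByMonic_add_div (wordPoly n c) g
  have hmem {c : ZMod n → F} (hc : g ∣ wordPoly n c) :
      wordPoly n c /ₘ g ∈ degreeLT F m := by
    rw [mem_degreeLT]
    by_cases h0 : wordPoly n c /ₘ g = 0
    · simp [h0]
    have := natDegree_wordPoly_lt c
    rw [← hquot hc, natDegree_mul hg.ne_zero h0] at this
    have := natDegree_add_natDegree_of_mul_eq_X_pow_sub_one hgh
    exact (degree_le_natDegree).trans_lt (by exact_mod_cast (by omega : _ < m))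
  let φ : {c : ZMod n → F | g ∣ wordPoly n c} → degreeLT F m := fun c => ⟨_, hmem c.2⟩
  have hφ : Injective φ := fun c c' hcc => Subtype.ext <| wordPoly_injective <| by
    rw [← hquot c.2, ← hquot c'.2]
    exact congrArg (g * ·) (congrArg Subtype.val hcc)
  have : Finite (degreeLT F m) := .of_equiv _ (degreeLTEquiv F m).toEquiv.symm
  calc _ = Nat.card {c : ZMod n → F | g ∣ wordPoly n c} := (Nat.card_coe_set_eq _).symm
    _ ≤ Nat.card (degreeLT F m) := Nat.card_le_card_of_injective φ hφ
    _ = Fintype.card F ^ m := by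
      rw [Nat.card_congr (degreeLTEquiv F m).toEquiv, Nat.card_fun, Nat.card_eq_fintype_card]
      simp

end CyclicCode

theorem stmt5_general {F : Type*} [Field F] [Fintype F]
    (q : ℕ) (hq : q = Fintype.card F)
    (k N n : ℕ) (hNdvd : N ∣ q ^ k - 1)
    (hn : n = (q ^ k - 1) / N)
    (g h : F[X]) (hmonic : g.Monic) (hirr : Irreducible h)
    (hgh : g * h = X ^ n - 1) (hdeg : h.natDegree = k)
    (hper : IsLeast {T : ℕ | 0 < T ∧ h ∣ X ^ T - 1} n)
    (C : Set (ZMod n → F))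
    (hC : C = {c : ZMod n → F |
      g ∣ ∑ i ∈ Finset.range n, Polynomial.C (c (i : ZMod n)) * X ^ i})
    (s : ℕ) (hs : s = Set.ncard {w : ℕ | ∃ c ∈ C, c ≠ 0 ∧ hwt c = w}) :
    s ≤ N := by
  classical
  have : NeZero n := ⟨hper.1.1.ne'⟩
  change C = {c | g ∣ wordPoly n c} at hC
  set S : Finset (ZMod n → F) := {c | g ∣ wordPoly n c ∧ c ≠ 0}
  have hS : (S : Set (ZMod n → F)) = C \ {0} := by ext; simp [S, hC]
  have hs' : s = #(S.image hwt) := by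
    rw [hs, ← Set.ncard_coe_finset, coe_image, hS]
    congr 1
    ext w
    simp [and_assoc]
  have hcard : #S ≤ q ^ k - 1 := by
    rw [← Set.ncard_coe_finset, hS, Set.ncard_sdiff_singleton_of_mem (by simp [hC]), hq, ← hdeg]
    exact Nat.sub_le_sub_right (hC ▸ ncard_setOf_dvd_wordPoly_le hmonic hgh) 1
  have hcount : #(S.image hwt) * n ≤ #S :=
    card_image_mul_le_card_of_le_minimalPeriod hwt_cycShift
      (fun c hc => by
        simp only [S, coe_filter, mem_univ, true_and] at hc ⊢
        exact ⟨dvd_wordPoly_cycShift ⟨h, hgh.symm⟩ hc.1, cycShift_ne_zero hc.2⟩)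
      (fun c hc => by
        simp only [S, mem_filter, mem_univ, true_and] at hc
        exact le_minimalPeriod_cycShift hgh hirr hper.2 hc.1 hc.2)
  have hnN : q ^ k - 1 = N * n := by rw [hn, Nat.mul_div_cancel' hNdvd]
  rw [hs']
  exact Nat.le_of_mul_le_mul_right (by omega) hper.1.1

/-- Let `q` be a prime power (the cardinality of the finite field `F`), `k ≥ 1`,
`N ∣ q^k - 1`, `n = (q^k - 1)/N` and `gcd(n,q) = 1`.  If `C` is an irreducible cyclic
code of length `n` and dimension `k` over `F` (i.e. `C` consists of the words whose
associated polynomials are multiples of the generator `g`, where `g·h = x^n - 1`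
and the check polynomial `h` is irreducible of degree `k`) whose check polynomial
has period `n`, then the number `s` of distinct nonzero weights of `C` is at most `N`. -/
theorem stmt5 {F : Type*} [Field F] [Fintype F]
    (q : ℕ) (hq : q = Fintype.card F)
    (k N n : ℕ) (hk : 1 ≤ k) (hN : 0 < N) (hNdvd : N ∣ q ^ k - 1)
    (hn : n = (q ^ k - 1) / N) (hcop : Nat.Coprime n q)
    (g h : F[X]) (hmonic : g.Monic) (hirr : Irreducible h)
    (hgh : g * h = X ^ n - 1) (hdeg : h.natDegree = k)
    (hper : IsLeast {T : ℕ | 0 < T ∧ h ∣ X ^ T - 1} n)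
    (C : Set (ZMod n → F))
    (hC : C = {c : ZMod n → F |
      g ∣ ∑ i ∈ Finset.range n, Polynomial.C (c (i : ZMod n)) * X ^ i})
    (s : ℕ) (hs : s = Set.ncard {w : ℕ | ∃ c ∈ C, c ≠ 0 ∧ hwt c = w}) :
    s ≤ N :=
  stmt5_general q hq k N n hNdvd hn g h hmonic hirr hgh hdeg hper C hC s hs
end

section
/- Let q be a prime power, k ≥ 1, N a positive integer with N dividing q^k − 1, and n = (q^k − 1)/N, with gcd(n,q) = 1. Let C be an irreducible cyclic code of length n and dimension k over F_q whose check polynomial h has period n. Then the number of distinct nonzero weights s of C satisfies s ≤ gcd(N, (q^k − 1)/(q − 1)). -/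
open Polynomial

lemma aux_div_dvd {a b m : ℕ} (ha : 0 < a) (hm : 0 < m) (hab : a ∣ b) (hbm : b ∣ m) :
    m / b ∣ m / a := by
  obtain ⟨t, rfl⟩ := hab
  obtain ⟨u, hu⟩ := hbm
  have hat : 0 < a * t := by
    rcases Nat.eq_zero_or_pos (a * t) with h0 | h0
    · rw [h0, zero_mul] at hu; omega
    · exact h0
  rw [hu, Nat.mul_div_cancel_left u hat, mul_assoc, Nat.mul_div_cancel_left (t * u) ha]
  exact Dvd.intro_left t rfl

/-- docstring placeholder -/
lemma aux_dvd_pow_mod {F : Type*} [CommRing F] {n : ℕ} (hn : 0 < n) (a : ℕ) :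
    (X ^ n - 1 : F[X]) ∣ X ^ a - X ^ (a % n) := by
  have h1 : (X : F[X]) ^ a = (X ^ n) ^ (a / n) * X ^ (a % n) := by
    rw [← pow_mul, ← pow_add, Nat.div_add_mod]
  have h2 : (X ^ n - 1 : F[X]) ∣ (X ^ n) ^ (a / n) - 1 := by
    simpa using sub_dvd_pow_sub_pow ((X : F[X]) ^ n) 1 (a / n)
  have h3 : (X : F[X]) ^ a - X ^ (a % n) = ((X ^ n) ^ (a / n) - 1) * X ^ (a % n) := by
    rw [h1]; ring
  rw [h3]
  exact h2.mul_right _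

lemma aux_decomp {G : Type*} [CommGroup G] (a b : ℕ) (ha : 0 < a) (hb : 0 < b) (u : G)
    (hu : u ^ Nat.lcm a b = 1) : ∃ v w : G, v ^ a = 1 ∧ w ^ b = 1 ∧ u = v * w := by
  set L := Nat.lcm a b with hL
  have hdvd_a : a ∣ L := Nat.dvd_lcm_left a b
  have hdvd_b : b ∣ L := Nat.dvd_lcm_right a b
  have hgpos : 0 < Nat.gcd a b := Nat.gcd_pos_of_pos_left b ha
  have h1 : L / a = b / Nat.gcd a b := by
    rw [hL, Nat.lcm, Nat.mul_div_assoc a (Nat.gcd_dvd_right a b), Nat.mul_div_cancel_left _ ha]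
  have h2 : L / b = a / Nat.gcd a b := by
    rw [hL, Nat.lcm_comm, Nat.lcm, Nat.mul_div_assoc b (Nat.gcd_dvd_right b a),
      Nat.mul_div_cancel_left _ hb, Nat.gcd_comm]
  have hco : Nat.Coprime (L / a) (L / b) := by
    rw [h1, h2]
    exact (Nat.coprime_div_gcd_div_gcd hgpos).symm
  have hico : IsCoprime ((L / a : ℕ) : ℤ) ((L / b : ℕ) : ℤ) := Nat.isCoprime_iff_coprime.mpr hco
  obtain ⟨x, y, hxy⟩ := hico
  have huL : ∀ z : ℤ, u ^ ((L : ℤ) * z) = 1 := by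
    intro z
    rw [zpow_mul, zpow_natCast, hu, one_zpow]
  refine ⟨u ^ (x * ((L / a : ℕ) : ℤ)), u ^ (y * ((L / b : ℕ) : ℤ)), ?_, ?_, ?_⟩
  · have hh : ((L / a : ℕ) : ℤ) * (a : ℤ) = (L : ℤ) := by
      exact_mod_cast congrArg (Nat.cast (R := ℤ)) (Nat.div_mul_cancel hdvd_a)
    have : x * ((L / a : ℕ) : ℤ) * (a : ℤ) = (L : ℤ) * x := by
      calc x * ((L / a : ℕ) : ℤ) * (a : ℤ) = x * (((L / a : ℕ) : ℤ) * (a : ℤ)) := by ring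
        _ = (L : ℤ) * x := by rw [hh]; ring
    rw [← zpow_natCast (u ^ (x * ((L / a : ℕ) : ℤ))) a, ← zpow_mul, this, huL]
  · have hh : ((L / b : ℕ) : ℤ) * (b : ℤ) = (L : ℤ) := by
      exact_mod_cast congrArg (Nat.cast (R := ℤ)) (Nat.div_mul_cancel hdvd_b)
    have : y * ((L / b : ℕ) : ℤ) * (b : ℤ) = (L : ℤ) * y := by
      calc y * ((L / b : ℕ) : ℤ) * (b : ℤ) = y * (((L / b : ℕ) : ℤ) * (b : ℤ)) := by ring
        _ = (L : ℤ) * y := by rw [hh]; ring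
    rw [← zpow_natCast (u ^ (y * ((L / b : ℕ) : ℤ))) b, ← zpow_mul, this, huL]
  · rw [← zpow_add, ← zpow_one u]
    congr 1
    rw [zpow_one]
    linarith [hxy]

lemma aux_p_eq {F : Type*} [Semiring F] {n : ℕ} [NeZero n] (c : ZMod n → F) :
    ∑ i ∈ Finset.range n, Polynomial.C (c (i : ZMod n)) * X ^ i
      = ∑ z : ZMod n, Polynomial.C (c z) * X ^ z.val := by
  refine Finset.sum_bij' (fun i _ => (i : ZMod n)) (fun z _ => z.val) (fun i _ => Finset.mem_univ _)
    (fun z _ => Finset.mem_range.mpr z.val_lt) ?_ ?_ ?_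
  · intro i hi
    exact ZMod.val_cast_of_lt (Finset.mem_range.mp hi)
  · intro z _
    exact ZMod.natCast_rightInverse z
  · intro i hi
    rw [ZMod.val_cast_of_lt (Finset.mem_range.mp hi)]

lemma aux_coeff {F : Type*} [Semiring F] {n : ℕ} [NeZero n] (c : ZMod n → F) (z : ZMod n) :
    (∑ w : ZMod n, Polynomial.C (c w) * X ^ w.val).coeff z.val = c z := by
  rw [Polynomial.finset_sum_coeff]
  rw [Finset.sum_eq_single z]
  · simp [Polynomial.coeff_C_mul, Polynomial.coeff_X_pow]
  · intro w _ hwz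
    have : z.val ≠ w.val := fun he => hwz (ZMod.val_injective n he).symm
    simp [Polynomial.coeff_C_mul, Polynomial.coeff_X_pow, this]
  · intro habs
    exact absurd (Finset.mem_univ z) habs

lemma aux_deg {F : Type*} [Semiring F] {n : ℕ} [NeZero n] (c : ZMod n → F) :
    (∑ z : ZMod n, Polynomial.C (c z) * X ^ z.val).degree < (n : WithBot ℕ) := by
  have hn : 0 < n := Nat.pos_of_ne_zero (NeZero.ne n)
  refine lt_of_le_of_lt (Polynomial.degree_sum_le _ _) ?_
  rw [Finset.sup_lt_iff (by exact_mod_cast WithBot.bot_lt_coe n)]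
  intro z _
  refine lt_of_le_of_lt (Polynomial.degree_C_mul_X_pow_le _ _) ?_
  exact_mod_cast z.val_lt

lemma aux_shift {F : Type*} [CommRing F] {n : ℕ} [NeZero n] (c : ZMod n → F) (j : ℕ) :
    (X ^ n - 1 : F[X]) ∣ X ^ j * (∑ z : ZMod n, Polynomial.C (c z) * X ^ z.val)
      - ∑ z : ZMod n, Polynomial.C (c (z - (j : ZMod n))) * X ^ z.val := by
  have hn : 0 < n := Nat.pos_of_ne_zero (NeZero.ne n)
  have h2 : ∑ z : ZMod n, (Polynomial.C (c (z - (j : ZMod n))) : F[X]) * X ^ z.val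
      = ∑ z : ZMod n, Polynomial.C (c z) * X ^ ((z + (j : ZMod n)).val) := by
    refine (Fintype.sum_equiv (Equiv.addRight (j : ZMod n))
      (fun z => Polynomial.C (c z) * X ^ ((z + (j : ZMod n)).val))
      (fun z => Polynomial.C (c (z - (j : ZMod n))) * X ^ z.val) ?_).symm
    intro z
    simp [Equiv.coe_addRight]
  rw [h2, Finset.mul_sum, ← Finset.sum_sub_distrib]
  refine Finset.dvd_sum ?_
  intro z _
  have hv : (z + (j : ZMod n)).val = (z.val + j) % n := by
    rw [ZMod.val_add, ZMod.val_natCast]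
    conv_rhs => rw [Nat.add_mod]
    rw [Nat.mod_eq_of_lt z.val_lt]
  have heq : X ^ j * (Polynomial.C (c z) * X ^ z.val)
      - Polynomial.C (c z) * X ^ ((z + (j : ZMod n)).val)
      = Polynomial.C (c z) * (X ^ (z.val + j) - X ^ ((z.val + j) % n)) := by
    rw [hv]; ring
  rw [heq]
  exact (aux_dvd_pow_mod hn _).mul_left _

/-- Let `q` be a prime power (the cardinality of the finite field `F`), `k ≥ 1`,
`N ∣ q^k - 1`, `n = (q^k - 1)/N` and `gcd(n,q) = 1`.  If `C` is an irreducible cyclic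
code of length `n` and dimension `k` over `F` (i.e. `C` consists of the words whose
associated polynomials are multiples of the generator `g`, where `g·h = x^n - 1`
and the check polynomial `h` is irreducible of degree `k`) whose check polynomial
has period `n`, then the number `s` of distinct nonzero weights of `C` is at most `gcd(N, (q^k-1)/(q-1))`. -/
theorem stmt6 {F : Type*} [Field F] [Fintype F]
    (q : ℕ) (hq : q = Fintype.card F)
    (k N n : ℕ) (hk : 1 ≤ k) (hN : 0 < N) (hNdvd : N ∣ q ^ k - 1)
    (hn : n = (q ^ k - 1) / N) (hcop : Nat.Coprime n q)
    (g h : F[X]) (hmonic : g.Monic) (hirr : Irreducible h)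
    (hgh : g * h = X ^ n - 1) (hdeg : h.natDegree = k)
    (hper : IsLeast {T : ℕ | 0 < T ∧ h ∣ X ^ T - 1} n)
    (C : Set (ZMod n → F))
    (hC : C = {c : ZMod n → F |
      g ∣ ∑ i ∈ Finset.range n, Polynomial.C (c (i : ZMod n)) * X ^ i})
    (s : ℕ) (hs : s = Set.ncard {w : ℕ | ∃ c ∈ C, c ≠ 0 ∧ hwt c = w}) :
    s ≤ Nat.gcd N ((q ^ k - 1) / (q - 1)) := by
  classical
  -- numerics
  have hq2 : 2 ≤ q := by rw [hq]; exact Fintype.one_lt_card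
  have hn0 : 0 < n := hper.1.1
  haveI : NeZero n := ⟨hn0.ne'⟩
  have hqk2 : 2 ≤ q ^ k := le_trans hq2 (Nat.le_self_pow (by omega) q)
  set m := q ^ k - 1 with hm
  have hm0 : 0 < m := by omega
  have hq1 : 0 < q - 1 := by omega
  have hndvd : n ∣ m := hn ▸ Nat.div_dvd_of_dvd hNdvd
  have hq1dvd : q - 1 ∣ m := by simpa using Nat.sub_dvd_pow_sub_pow q 1 k
  set L := Nat.lcm n (q - 1) with hLdef
  have hL0 : 0 < L := Nat.lcm_pos hn0 hq1
  have hLm : L ∣ m := Nat.lcm_dvd hndvd hq1dvd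
  have hmn : m / n = N := by rw [hn, Nat.div_div_self hNdvd hm0.ne']
  have hdivdvd : ∀ a b : ℕ, 0 < a → a ∣ b → b ∣ m → m / b ∣ m / a :=
    fun a b ha hab hbm => aux_div_dvd ha hm0 hab hbm
  have key_dvd : m / L ∣ Nat.gcd N (m / (q - 1)) :=
    Nat.dvd_gcd (hmn ▸ hdivdvd n L hn0 (Nat.dvd_lcm_left _ _) hLm)
      (hdivdvd (q - 1) L hq1 (Nat.dvd_lcm_right _ _) hLm)
  have hgcd0 : 0 < Nat.gcd N (m / (q - 1)) := Nat.gcd_pos_of_pos_left _ hN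
  suffices hsml : s ≤ m / L by exact le_trans hsml (Nat.le_of_dvd hgcd0 key_dvd)
  -- coprimality of g and h
  have hhdvd : h ∣ (X : F[X]) ^ n - 1 := hper.1.2
  have hcharn : (n : F) ≠ 0 := by
    intro h0
    have hp : (ringChar F).Prime := CharP.char_is_prime F (ringChar F)
    have hpn : ringChar F ∣ n := (CharP.cast_eq_zero_iff F (ringChar F) n).mp h0
    obtain ⟨e, _, hcard⟩ := FiniteField.card F (ringChar F)
    have hpq : ringChar F ∣ q := by
      rw [hq, hcard]
      exact dvd_pow_self _ (by exact_mod_cast e.ne_zero)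
    have hd : ringChar F ∣ Nat.gcd n q := Nat.dvd_gcd hpn hpq
    rw [hcop] at hd
    exact hp.ne_one (Nat.dvd_one.mp hd)
  have hsq : Squarefree ((X : F[X]) ^ n - 1) := by
    have := Polynomial.separable_X_pow_sub_C (1 : F) hcharn one_ne_zero
    rw [map_one] at this
    exact this.squarefree
  have hnd : ¬ h ∣ g := by
    intro hdvd
    obtain ⟨g', rfl⟩ := hdvd
    have : h * h ∣ (X : F[X]) ^ n - 1 := ⟨g', by rw [← hgh]; ring⟩
    exact hirr.not_isUnit (hsq h this)
  have hco : IsCoprime g h := (hirr.coprime_iff_not_dvd.mpr hnd).symm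
  have hdegXn : ((X : F[X]) ^ n - 1).degree = n := by
    rw [← Polynomial.C_1, Polynomial.degree_X_pow_sub_C hn0]
  -- the field K
  haveI := Fact.mk hirr
  set K := AdjoinRoot h with hK
  haveI : Fintype K := Module.fintypeOfFintype (AdjoinRoot.powerBasis hirr.ne_zero).basis
  have hcardK : Fintype.card K = q ^ k := by
    have hdim : (AdjoinRoot.powerBasis hirr.ne_zero).dim = k := by
      simpa [AdjoinRoot.powerBasis] using hdeg
    rw [Module.card_fintype (AdjoinRoot.powerBasis hirr.ne_zero).basis, ← hq, Fintype.card_fin,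
      hdim]
  have hcardKu : Nat.card Kˣ = m := by
    rw [Nat.card_units, Nat.card_eq_fintype_card, hcardK]
  -- the root α
  set α : K := AdjoinRoot.root h with hα
  have hmkT : ∀ T : ℕ, AdjoinRoot.mk h ((X : F[X]) ^ T - 1) = α ^ T - 1 := by
    intro T
    rw [map_sub, map_pow, AdjoinRoot.mk_X, map_one, ← hα]
  have halpha : ∀ T : ℕ, α ^ T = 1 ↔ h ∣ (X : F[X]) ^ T - 1 := by
    intro T
    rw [← sub_eq_zero, ← hmkT, AdjoinRoot.mk_eq_zero]
  have hαn : α ^ n = 1 := (halpha n).mpr hhdvd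
  have hfinα : IsOfFinOrder α := isOfFinOrder_iff_pow_eq_one.mpr ⟨n, hn0, hαn⟩
  have hordα : orderOf α = n := by
    have h1 : orderOf α ∣ n := orderOf_dvd_of_pow_eq_one hαn
    have h2 : n ≤ orderOf α := hper.2 ⟨hfinα.orderOf_pos, (halpha _).mp (pow_orderOf_eq_one α)⟩
    exact le_antisymm (Nat.le_of_dvd hn0 h1) h2
  have hα0 : α ≠ 0 := by
    intro h0
    rw [h0, zero_pow hn0.ne'] at hαn
    exact zero_ne_one hαn
  set αu : Kˣ := Units.mk0 α hα0 with hαu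
  have hordαu : orderOf αu = n := by
    rw [← orderOf_units]; exact hordα
  -- generator of Fˣ and its image
  obtain ⟨μ, hμgen⟩ := IsCyclic.exists_generator (α := Fˣ)
  have hordμ : orderOf μ = q - 1 := by
    rw [orderOf_eq_card_of_forall_mem_zpowers hμgen, Nat.card_units,
      Nat.card_eq_fintype_card, hq]
  set ι : F →+* K := algebraMap F K with hι
  have hιinj : Function.Injective ι := ι.injective
  set μ' : Kˣ := Units.map (ι : F →* K) μ with hμ'
  have hordμ' : orderOf μ' = q - 1 := by
    rw [← hordμ]
    exact orderOf_injective (Units.map (ι : F →* K)) (Units.map_injective hιinj) μ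
  -- the evaluation map γ
  set P : (ZMod n → F) → F[X] := fun c => ∑ z : ZMod n, Polynomial.C (c z) * X ^ z.val with hP
  have hCP : ∀ c, c ∈ C ↔ g ∣ P c := by
    intro c
    rw [hC, Set.mem_setOf_eq, aux_p_eq c]
  set γ : (ZMod n → F) → K := fun c => AdjoinRoot.mk h (P c) with hγ
  -- injectivity of γ on C
  have hinj : ∀ c1 ∈ C, ∀ c2 ∈ C, γ c1 = γ c2 → c1 = c2 := by
    intro c1 h1 c2 h2 heq
    have hdvd_h : h ∣ P c1 - P c2 := by
      rwa [← sub_eq_zero, ← map_sub, AdjoinRoot.mk_eq_zero] at heq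
    have hdvd_g : g ∣ P c1 - P c2 := dvd_sub ((hCP c1).mp h1) ((hCP c2).mp h2)
    have hzero : P c1 - P c2 = 0 := by
      refine Polynomial.eq_zero_of_dvd_of_degree_lt (hgh ▸ hco.mul_dvd hdvd_g hdvd_h) ?_
      rw [hdegXn]
      exact lt_of_le_of_lt (Polynomial.degree_sub_le _ _) (max_lt (aux_deg c1) (aux_deg c2))
    funext z
    rw [← aux_coeff c1 z, ← aux_coeff c2 z]
    exact congrArg (fun p => Polynomial.coeff p z.val) (sub_eq_zero.mp hzero)
  have h0C : (0 : ZMod n → F) ∈ C := by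
    rw [hCP]
    simp [hP]
  have hγ0C : γ 0 = 0 := by simp [hγ, hP]
  have hγ0 : ∀ c ∈ C, c ≠ 0 → γ c ≠ 0 := by
    intro c hc hc0 h0
    exact hc0 (hinj c hc 0 h0C (by rw [h0, hγ0C]))
  -- the shift lemma
  have hshift : ∀ c ∈ C, ∀ (j : ℕ) (lam : F), lam ≠ 0 →
      (fun z : ZMod n => lam * c (z - (j : ZMod n))) ∈ C ∧
      γ (fun z : ZMod n => lam * c (z - (j : ZMod n))) = ι lam * α ^ j * γ c ∧
      hwt (fun z : ZMod n => lam * c (z - (j : ZMod n))) = hwt c := by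
    intro c hc j lam hlam
    set c' : ZMod n → F := fun z => lam * c (z - (j : ZMod n)) with hc'
    have hPc' : P c' = Polynomial.C lam * ∑ z : ZMod n, Polynomial.C (c (z - (j : ZMod n))) * X ^ z.val := by
      rw [hP]
      simp only [hc', map_mul, Finset.mul_sum, mul_assoc]
    have hdvd : (X ^ n - 1 : F[X]) ∣ Polynomial.C lam * (X ^ j * P c) - P c' := by
      rw [hPc', ← mul_sub]
      exact (aux_shift c j).mul_left _
    have hgXn : g ∣ (X : F[X]) ^ n - 1 := ⟨h, hgh.symm⟩
    refine ⟨?_, ?_, ?_⟩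
    · rw [hCP]
      have hg2 : g ∣ Polynomial.C lam * (X ^ j * P c) := (((hCP c).mp hc).mul_left _).mul_left _
      have hrw : P c' = Polynomial.C lam * (X ^ j * P c) - (Polynomial.C lam * (X ^ j * P c) - P c') := by
        ring
      rw [hrw]
      exact dvd_sub hg2 (hgXn.trans hdvd)
    · have h1 : AdjoinRoot.mk h (Polynomial.C lam * (X ^ j * P c) - P c') = 0 :=
        AdjoinRoot.mk_eq_zero.mpr (hhdvd.trans hdvd)
      rw [map_sub, sub_eq_zero] at h1
      rw [hγ]
      simp only []
      rw [← h1, map_mul, map_mul, map_pow, AdjoinRoot.mk_X, AdjoinRoot.mk_C]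
      rw [hι, AdjoinRoot.algebraMap_eq, ← hα]
      ring
    · unfold hwt
      have hset : {z : ZMod n | c' z ≠ 0} = (fun z => z + (j : ZMod n)) '' {z : ZMod n | c z ≠ 0} := by
        ext z
        simp only [Set.mem_setOf_eq, Set.mem_image, hc']
        constructor
        · intro hz
          exact ⟨z - (j : ZMod n), (mul_ne_zero_iff.mp hz).2, by ring⟩
        · rintro ⟨w, hw, rfl⟩
          have : w + (j : ZMod n) - (j : ZMod n) = w := by ring
          rw [this]
          exact mul_ne_zero hlam hw
      rw [hset, Set.ncard_image_of_injective _ (add_left_injective _)]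
  -- counting part
  set powL : Kˣ →* Kˣ := powMonoidHom L with hpowL
  obtain ⟨ζ, hζgen⟩ := IsCyclic.exists_generator (α := Kˣ)
  have hordζ : orderOf ζ = m := by
    rw [orderOf_eq_card_of_forall_mem_zpowers hζgen, hcardKu]
  have hordξ : orderOf (ζ ^ (m / L)) = L := by
    rw [orderOf_pow, hordζ, Nat.gcd_eq_right (Nat.div_dvd_of_dvd hLm),
      Nat.div_div_self hLm hm0.ne']
  have hker_ge : L ≤ Nat.card powL.ker := by
    have hle : Subgroup.zpowers (ζ ^ (m / L)) ≤ powL.ker := by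
      rw [Subgroup.zpowers_le]
      rw [MonoidHom.mem_ker, hpowL]
      show (ζ ^ (m / L)) ^ L = 1
      rw [← pow_mul, Nat.div_mul_cancel hLm, ← hordζ, pow_orderOf_eq_one]
    calc L = Nat.card (Subgroup.zpowers (ζ ^ (m / L))) := by rw [Nat.card_zpowers, hordξ]
      _ ≤ Nat.card powL.ker := Subgroup.card_le_of_le hle
  have hrange_card : Nat.card powL.range * Nat.card powL.ker = m := by
    rw [← hcardKu, Subgroup.card_eq_card_quotient_mul_card_subgroup powL.ker]
    congr 1
    exact (Nat.card_congr (QuotientGroup.quotientKerEquivRange powL).toEquiv).symm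
  have hrange_le : Nat.card powL.range ≤ m / L := by
    rw [Nat.le_div_iff_mul_le hL0]
    calc Nat.card powL.range * L ≤ Nat.card powL.range * Nat.card powL.ker :=
          Nat.mul_le_mul_left _ hker_ge
      _ = m := hrange_card
  -- the injection from the set of weights
  set W : Set ℕ := {w : ℕ | ∃ c ∈ C, c ≠ 0 ∧ hwt c = w} with hW
  have hchoice : ∀ w ∈ W, ∃ c, c ∈ C ∧ c ≠ 0 ∧ hwt c = w := by
    intro w hw
    obtain ⟨c, hc1, hc2, hc3⟩ := hw
    exact ⟨c, hc1, hc2, hc3⟩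
  set f : ℕ → Kˣ := fun w =>
    if hw : w ∈ W then
      (Units.mk0 (γ (hchoice w hw).choose)
        (hγ0 _ (hchoice w hw).choose_spec.1 (hchoice w hw).choose_spec.2.1)) ^ L
    else 1 with hf
  have hmaps : ∀ w ∈ W, f w ∈ (powL.range : Set Kˣ) := by
    intro w hw
    rw [hf]
    simp only [dif_pos hw]
    exact ⟨_, rfl⟩
  have hinjOn : Set.InjOn f W := by
    intro w1 hw1 w2 hw2 heq
    rw [hf] at heq
    simp only [dif_pos hw1, dif_pos hw2] at heq
    set c1 := (hchoice w1 hw1).choose with hc1def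
    set c2 := (hchoice w2 hw2).choose with hc2def
    have hspec1 := (hchoice w1 hw1).choose_spec
    have hspec2 := (hchoice w2 hw2).choose_spec
    rw [← hc1def] at hspec1
    rw [← hc2def] at hspec2
    obtain ⟨hc1C, hc1ne, hc1w⟩ := hspec1
    obtain ⟨hc2C, hc2ne, hc2w⟩ := hspec2
    set u1 : Kˣ := Units.mk0 (γ c1) (hγ0 _ hc1C hc1ne) with hu1
    set u2 : Kˣ := Units.mk0 (γ c2) (hγ0 _ hc2C hc2ne) with hu2
    have hpow1 : (u2 * u1⁻¹) ^ L = 1 := by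
      rw [mul_pow, inv_pow, heq, mul_inv_cancel]
    obtain ⟨v, w', hv, hw', huvw⟩ := aux_decomp n (q - 1) hn0 hq1 (u2 * u1⁻¹) hpow1
    -- v is a power of αu
    have hfinαu : IsOfFinOrder αu := by
      rw [← orderOf_pos_iff, hordαu]; exact hn0
    have hprimα : IsPrimitiveRoot αu n := hordαu ▸ IsPrimitiveRoot.orderOf αu
    have hvmem : v ∈ Subgroup.zpowers αu := by
      rw [hprimα.zpowers_eq]
      exact (mem_rootsOfUnity n v).mpr hv
    obtain ⟨j, hj⟩ := hfinαu.mem_powers_iff_mem_zpowers.mpr hvmem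
    -- w' is a power of μ'
    haveI : NeZero (q - 1) := ⟨hq1.ne'⟩
    have hfinμ' : IsOfFinOrder μ' := by
      rw [← orderOf_pos_iff, hordμ']; exact hq1
    have hprimμ' : IsPrimitiveRoot μ' (q - 1) := hordμ' ▸ IsPrimitiveRoot.orderOf μ'
    have hwmem : w' ∈ Subgroup.zpowers μ' := by
      rw [hprimμ'.zpowers_eq]
      exact (mem_rootsOfUnity (q - 1) w').mpr hw'
    obtain ⟨i, hi⟩ := hfinμ'.mem_powers_iff_mem_zpowers.mpr hwmem
    set lam : F := ((μ ^ i : Fˣ) : F) with hlam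
    have hlam0 : lam ≠ 0 := Units.ne_zero _
    have hw'val : (w' : K) = ι lam := by
      rw [← hi, hμ']
      simp [hlam]
    have hu2eq : (γ c2 : K) = ι lam * α ^ j * γ c1 := by
      have hu2v : u2 = v * w' * u1 := by
        rw [← huvw]
        group
      have := congrArg (Units.val) hu2v
      rw [Units.val_mul, Units.val_mul] at this
      rw [hu2, Units.val_mk0] at this
      rw [this, ← hj, hw'val]
      have hαuj : ((αu ^ j : Kˣ) : K) = α ^ j := by
        rw [Units.val_pow_eq_pow_val, hαu, Units.val_mk0]
      rw [hαuj, hu1, Units.val_mk0]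
      ring
    obtain ⟨hcC', hγc', _hwtc'⟩ := hshift c1 hc1C j lam hlam0
    have hceq : c2 = fun z : ZMod n => lam * c1 (z - (j : ZMod n)) :=
      hinj c2 hc2C _ hcC' (by rw [hγc', hu2eq])
    rw [← hc1w, ← hc2w, hceq, _hwtc']
  have htfin : (powL.range : Set Kˣ).Finite := Set.toFinite _
  rw [hs]
  calc Set.ncard W ≤ (powL.range : Set Kˣ).ncard :=
        Set.ncard_le_ncard_of_injOn f hmaps hinjOn htfin
    _ = Nat.card powL.range := by rw [← Nat.card_coe_set_eq]; rfl
    _ ≤ m / L := hrange_le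
end

section
/- Let D be a cyclic code of length n and dimension n − k over F_q, and let D^⊥ be its dual with respect to the standard inner product (D^⊥ is a cyclic code of length n and dimension k). Then the number of distinct nonzero weights of D^⊥ is at least the covering radius of D. -/
/-- Hamming distance: the number of coordinates where two words differ. -/
noncomputable def hdist {ι F : Type*} (x y : ι → F) : ℕ := Set.ncard {i | x i ≠ y i}

/-- The covering radius of a code `D ⊆ F^n`: the smallest `t` such that every word of
`F^n` is within Hamming distance `t` of some codeword of `D`. -/
noncomputable def covRadius {F : Type*} {n : ℕ} (D : Set (ZMod n → F)) : ℕ :=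
  sInf {t : ℕ | ∀ x : ZMod n → F, ∃ c ∈ D, hdist x c ≤ t}

open Finset Polynomial

lemma hwt_eq_hammingNorm {ι F : Type*} [Fintype ι] [Zero F] [DecidableEq F] (v : ι → F) :
    hwt v = hammingNorm v := by
  simp [hwt, hammingNorm, Set.ncard_eq_toFinset_card']

lemma hdist_eq_hammingDist {ι F : Type*} [Fintype ι] [DecidableEq F] (x y : ι → F) :
    hdist x y = hammingDist x y := by
  simp [hdist, hammingDist, Set.ncard_eq_toFinset_card']

lemma Fintype.sum_eq_zero_of_add_right_eq_mul {V R : Type*} [AddGroup V] [Fintype V]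
    [CommRing R] [IsDomain R] {g : V → R} (z : V) {r : R} (hr : r ≠ 1)
    (h : ∀ v, g (v + z) = r * g v) : ∑ v, g v = 0 := by
  refine eq_zero_of_mul_eq_self_left hr ?_
  rw [Finset.mul_sum,
    ← Fintype.sum_equiv (Equiv.addRight z) (fun v => g (v + z)) g fun v => rfl]
  exact Finset.sum_congr rfl fun v _ => (h v).symm

lemma AddChar.IsPrimitive.exists_mul_ne_one {F R : Type*} [CommRing F] [CommMonoid R]
    {χ : AddChar F R} (hχ : χ.IsPrimitive) {b : F} (hb : b ≠ 0) : ∃ t, χ (b * t) ≠ 1 := by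
  simpa [AddChar.ne_one_iff] using hχ hb

lemma sum_addChar_dotProduct_eq_zero {ι F R : Type*} [Fintype ι] [Field F] [CommRing R]
    [IsDomain R] {χ : AddChar F R} (hχ : χ.IsPrimitive) (D : Submodule F (ι → F)) [Fintype D]
    {v c₀ : ι → F} (hc₀ : c₀ ∈ D) (hv : c₀ ⬝ᵥ v ≠ 0) :
    ∑ c : D, χ ((c : ι → F) ⬝ᵥ v) = 0 := by
  obtain ⟨t, ht⟩ := hχ.exists_mul_ne_one hv
  refine Fintype.sum_eq_zero_of_add_right_eq_mul ⟨t • c₀, D.smul_mem t hc₀⟩ ht fun c => ?_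
  rw [← AddChar.map_add_eq_mul, Submodule.coe_add, add_dotProduct, Submodule.coe_mk,
    smul_dotProduct, smul_eq_mul, mul_comm t, add_comm]

def dualWeights {ι F : Type*} [Fintype ι] [Field F] [DecidableEq F]
    (D : Submodule F (ι → F)) : Set ℕ :=
  {w | ∃ v : ι → F, (∀ c ∈ D, v ⬝ᵥ c = 0) ∧ v ≠ 0 ∧ hammingNorm v = w}

lemma dualWeights_finite {ι F : Type*} [Fintype ι] [Field F] [DecidableEq F]
    (D : Submodule F (ι → F)) : (dualWeights D).Finite :=
  (Set.finite_Iic (Fintype.card ι)).subset <| by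
    rintro _ ⟨v, -, -, rfl⟩
    exact hammingNorm_le_card_fintype

section CharacterSums

variable {ι F R : Type*} [Fintype ι] [DecidableEq ι] [Field F] [Fintype F]
  [CommRing R] [IsDomain R] {χ : AddChar F R}

lemma sum_mul_addChar_dotProduct_eq_zero (hχ : χ.IsPrimitive) {u : ι → F} {i₀ : ι}
    (hu : u i₀ ≠ 0) {f : (ι → F) → R} (hf : ∀ v t, f (v + Pi.single i₀ t) = f v) :
    ∑ v, f v * χ (u ⬝ᵥ v) = 0 := by
  obtain ⟨t, ht⟩ := hχ.exists_mul_ne_one hu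
  refine Fintype.sum_eq_zero_of_add_right_eq_mul (Pi.single i₀ t) ht fun v => ?_
  rw [hf, dotProduct_add, dotProduct_single, AddChar.map_add_eq_mul]
  ring

variable [DecidableEq F]

lemma sum_hammingNorm_pow_mul_addChar_eq_zero (hχ : χ.IsPrimitive) {u : ι → F} {d : ℕ}
    (hd : d < hammingNorm u) : ∑ v, (hammingNorm v : R) ^ d * χ (u ⬝ᵥ v) = 0 := by
  -- Each term of the expansion of `wt(v)^d` reads at most `d` coordinates of `v`,
  -- so it misses a coordinate in the support of `u`.
  have hpow : ∀ v : ι → F, (hammingNorm v : R) ^ d =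
      ∑ p : Fin d → ι, ∏ j, if v (p j) ≠ 0 then (1 : R) else 0 := fun v => by
    rw [hammingNorm, natCast_card_filter, Fintype.sum_pow]
  simp_rw [hpow, Finset.sum_mul]
  rw [Finset.sum_comm]
  refine Finset.sum_eq_zero fun p _ => ?_
  have hcard : #(univ.image p) < #{i | u i ≠ 0} :=
    (card_image_le.trans (by simp)).trans_lt hd
  obtain ⟨i₀, hi₀u, hi₀p⟩ := exists_mem_notMem_of_card_lt_card hcard
  refine sum_mul_addChar_dotProduct_eq_zero hχ (mem_filter.mp hi₀u).2 fun v t => ?_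
  refine Finset.prod_congr rfl fun j _ => ?_
  have hj : p j ≠ i₀ := fun h => hi₀p (mem_image.mpr ⟨j, mem_univ j, h⟩)
  simp [Pi.single_eq_of_ne hj]

lemma sum_eval_hammingNorm_mul_addChar_eq_zero (hχ : χ.IsPrimitive) {u : ι → F} {P : R[X]}
    (hP : P.natDegree < hammingNorm u) :
    ∑ v, P.eval (hammingNorm v : R) * χ (u ⬝ᵥ v) = 0 := by
  simp_rw [eval_eq_sum_range, Finset.sum_mul]
  rw [Finset.sum_comm]
  refine Finset.sum_eq_zero fun d hd => ?_
  simp_rw [mul_assoc, ← Finset.mul_sum]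
  rw [sum_hammingNorm_pow_mul_addChar_eq_zero hχ
    ((Nat.lt_succ_iff.mp (mem_range.mp hd)).trans_lt hP), mul_zero]

lemma sum_eval_hammingNorm_mul_sum_addChar (hχ : χ.IsPrimitive)
    (D : Submodule F (ι → F)) [Fintype D] (x : ι → F) {P : R[X]}
    (hP : ∀ w ∈ dualWeights D, P.eval (w : R) = 0) :
    ∑ v, P.eval (hammingNorm v : R) * ∑ c : D, χ ((x + (c : ι → F)) ⬝ᵥ v) =
      P.eval 0 * Fintype.card D := by
  rw [Fintype.sum_eq_single 0 fun v hv => ?_]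
  · simp
  by_cases hdual : ∀ c ∈ D, v ⬝ᵥ c = 0
  · rw [hP _ ⟨v, hdual, hv, rfl⟩, zero_mul]
  push Not at hdual
  obtain ⟨c₀, hc₀, hv⟩ := hdual
  simp_rw [add_dotProduct, AddChar.map_add_eq_mul, ← Finset.mul_sum]
  rw [sum_addChar_dotProduct_eq_zero hχ D hc₀ (by rwa [dotProduct_comm]), mul_zero, mul_zero]

end CharacterSums

theorem exists_hammingDist_le_ncard_dualWeights {ι F : Type*} [Fintype ι] [DecidableEq ι]
    [Field F] [Fintype F] [DecidableEq F] (D : Submodule F (ι → F)) (x : ι → F) :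
    ∃ c ∈ D, hammingDist x c ≤ (dualWeights D).ncard := by
  classical
  have hW := dualWeights_finite D
  by_contra! hfar
  have hχ := AddChar.FiniteField.primitiveChar_to_Complex_isPrimitive F
  set χ := AddChar.FiniteField.primitiveChar_to_Complex F
  let P : ℂ[X] := ∏ w ∈ hW.toFinset, (X - Polynomial.C (w : ℂ))
  have hPdeg : P.natDegree = (dualWeights D).ncard :=
    (natDegree_finsetProd_X_sub_C_eq_card _ _).trans (Set.ncard_eq_toFinset_card _ hW).symm
  have hPW : ∀ w ∈ dualWeights D, P.eval (w : ℂ) = 0 := fun w hw => by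
    rw [eval_prod]
    exact prod_eq_zero (hW.mem_toFinset.mpr hw) (by simp)
  have hP₀ : P.eval 0 ≠ 0 := by
    rw [eval_prod, prod_ne_zero_iff]
    rintro _ hw
    obtain ⟨v, -, hv₀, rfl⟩ := hW.mem_toFinset.mp hw
    simpa using hammingNorm_ne_zero_iff.mpr hv₀
  have hvanish :
      ∑ v, P.eval (hammingNorm v : ℂ) * ∑ c : D, χ ((x + (c : ι → F)) ⬝ᵥ v) = 0 := by
    simp_rw [Finset.mul_sum]
    rw [Finset.sum_comm]
    refine sum_eq_zero fun c _ => sum_eval_hammingNorm_mul_addChar_eq_zero hχ ?_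
    have hdist : hammingDist x (-c) = hammingNorm (x + (c : ι → F)) := by
      simp only [hammingDist, hammingNorm, Pi.add_apply, Pi.neg_apply, ne_eq,
        eq_neg_iff_add_eq_zero]
    exact hPdeg ▸ hdist ▸ hfar (-c) (D.neg_mem c.2)
  rw [sum_eval_hammingNorm_mul_sum_addChar hχ D x hPW] at hvanish
  exact mul_ne_zero hP₀ (Nat.cast_ne_zero.mpr Fintype.card_ne_zero) hvanish

theorem stmt11_general {F : Type*} [Field F] [Fintype F] {n : ℕ} [NeZero n]
    (D : Submodule F (ZMod n → F))
    (Ddual : Set (ZMod n → F))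
    (hDdual : Ddual = {x : ZMod n → F | ∀ c ∈ D, ∑ i : ZMod n, x i * c i = 0}) :
    covRadius (D : Set (ZMod n → F)) ≤
      Set.ncard {w : ℕ | ∃ x ∈ Ddual, x ≠ 0 ∧ hwt x = w} := by
  classical
  refine Nat.sInf_le fun x => ?_
  obtain ⟨c, hc, hxc⟩ := exists_hammingDist_le_ncard_dualWeights D x
  refine ⟨c, hc, ?_⟩
  simpa [hdist_eq_hammingDist, hwt_eq_hammingNorm, hDdual, dualWeights, dotProduct] using hxc

/-- If `D` is a cyclic code of length `n` and dimension `n - k` over `F_q`, then the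
number of distinct nonzero weights of the dual code `D^⊥` is at least the covering
radius of `D`. -/
theorem stmt11 {F : Type*} [Field F] [Fintype F] {n k : ℕ} [NeZero n] (hkn : k ≤ n)
    (D : Submodule F (ZMod n → F)) (hcyc : ∀ c ∈ D, cshift c ∈ D)
    (hdim : Module.finrank F D = n - k)
    (Ddual : Set (ZMod n → F))
    (hDdual : Ddual = {x : ZMod n → F | ∀ c ∈ D, ∑ i : ZMod n, x i * c i = 0}) :
    covRadius (D : Set (ZMod n → F)) ≤
      Set.ncard {w : ℕ | ∃ x ∈ Ddual, x ≠ 0 ∧ hwt x = w} :=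
  stmt11_general D Ddual hDdual
end

section
/- Let q be a prime power and r, m integers with m ≥ 2 and 0 ≤ r ≤ (m−1)(q−1) − 1. Then the weight set of RM_q(m(q−1)−r−1, m) contains the set of all sums w_1 + w_2 + … + w_q where each w_i belongs to the weight set of RM_q((m−1)(q−1)−r−1, m−1). -/
/-- The `q`-ary Reed–Muller code of order `s` in `m` variables over the field `F` of
cardinality `q`: all evaluation vectors, on the points of `F^m`, of `m`-variate
polynomials of total degree at most `s`. -/
def RMcode (F : Type*) [CommSemiring F] (s m : ℕ) : Set ((Fin m → F) → F) :=
  {c | ∃ f : MvPolynomial (Fin m) F, f.totalDegree ≤ s ∧ ∀ P, MvPolynomial.eval P f = c P}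

open MvPolynomial

/-- (Stated with `m + 1` playing the role of the `m ≥ 2` of the paper.)
For `0 ≤ r ≤ m(q-1) - 1`, the weight set of `RM_q((m+1)(q-1)-r-1, m+1)` contains all
sums of `q` weights taken from the weight set of `RM_q(m(q-1)-r-1, m)`. -/
theorem stmt14 {F : Type*} [Field F] [Fintype F]
    (q : ℕ) (hq : q = Fintype.card F)
    (m r : ℕ) (hm : 1 ≤ m) (hr : r + 1 ≤ m * (q - 1))
    (w : F → ℕ)
    (hw : ∀ a : F, w a ∈ {x : ℕ | ∃ c ∈ RMcode F (m * (q - 1) - r - 1) m, hwt c = x}) :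
    (∑ a : F, w a) ∈
      {x : ℕ | ∃ c ∈ RMcode F ((m + 1) * (q - 1) - r - 1) (m + 1), hwt c = x} := by
  classical
  choose c hc hwc using hw
  choose f hf hfe using hc
  have hq2 : 2 ≤ q := hq ▸ Fintype.one_lt_card
  set s := m * (q - 1) - r - 1 with hs
  -- the indicator of the field element a, as a polynomial in the last variable
  set δ : F → MvPolynomial (Fin (m + 1)) F :=
    fun a => 1 - (X (Fin.last m) - C a) ^ (q - 1) with hδ
  have hδeval : ∀ (a : F) (P : Fin (m + 1) → F),
      eval P (δ a) = if P (Fin.last m) = a then 1 else 0 := by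
    intro a P
    simp only [hδ, map_sub, map_pow, map_one, eval_X, eval_C]
    by_cases h : P (Fin.last m) = a
    · simp [h, zero_pow (by omega : q - 1 ≠ 0)]
    · rw [hq, FiniteField.pow_card_sub_one_eq_one _ (sub_ne_zero.mpr h)]
      simp [h]
  -- the combined codeword
  set c' : (Fin (m + 1) → F) → F :=
    fun P => c (P (Fin.last m)) (fun i => P i.castSucc) with hc'
  set g : MvPolynomial (Fin (m + 1)) F :=
    ∑ a : F, δ a * rename Fin.castSucc (f a) with hg
  have hgdeg : g.totalDegree ≤ (m + 1) * (q - 1) - r - 1 := by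
    refine le_trans (totalDegree_finset_sum _ _) ?_
    refine Finset.sup_le fun a _ => ?_
    refine le_trans (totalDegree_mul _ _) ?_
    have h1 : (δ a).totalDegree ≤ q - 1 := by
      refine le_trans (totalDegree_sub _ _) ?_
      simp only [totalDegree_one, max_le_iff]
      constructor
      · omega
      · refine le_trans (totalDegree_pow _ _) ?_
        have : (X (Fin.last m) - C a).totalDegree ≤ 1 := by
          refine le_trans (totalDegree_sub _ _) ?_
          simp [totalDegree_X, totalDegree_C]
        calc (q-1) * (X (Fin.last m) - C a).totalDegree ≤ (q-1) * 1 :=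
              Nat.mul_le_mul_left _ this
          _ = q - 1 := by omega
    have h2 : (rename (Fin.castSucc) (f a)).totalDegree ≤ s :=
      le_trans (totalDegree_rename_le _ _) (hf a)
    have hms : m * (q-1) + (q-1) = (m+1) * (q-1) := by ring
    have := Nat.add_le_add h1 h2
    omega
  have hgeval : ∀ P, eval P g = c' P := by
    intro P
    rw [hg, map_sum]
    rw [Finset.sum_eq_single (P (Fin.last m))]
    · rw [map_mul, hδeval, if_pos rfl, one_mul, eval_rename, hfe]
      rfl
    · intro b _ hb
      rw [map_mul, hδeval, if_neg (Ne.symm hb), zero_mul]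
    · simp
  have hcw : c' ∈ RMcode F ((m + 1) * (q - 1) - r - 1) (m + 1) := ⟨g, hgdeg, hgeval⟩
  refine ⟨c', hcw, ?_⟩
  -- weight computation
  have e : {P : Fin (m + 1) → F // c' P ≠ 0} ≃ Σ a : F, {Q : Fin m → F // c a Q ≠ 0} :=
    { toFun := fun P => ⟨P.1 (Fin.last m), ⟨fun i => P.1 i.castSucc, P.2⟩⟩
      invFun := fun x => ⟨Fin.snoc x.2.1 x.1, by
        simpa only [hc', Fin.snoc_last, Fin.snoc_castSucc] using x.2.2⟩
      left_inv := fun P => by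
        ext i
        refine Fin.lastCases ?_ (fun j => ?_) i
        · simp
        · simp
      right_inv := fun x => by
        rcases x with ⟨a, Q, hQ⟩
        refine Sigma.ext (by simp) ?_
        rw [Subtype.heq_iff_coe_eq (by simp)]
        funext i
        simp }
  have h1 : hwt c' = Nat.card {P : Fin (m + 1) → F // c' P ≠ 0} :=
    (Nat.card_coe_set_eq _).symm
  rw [h1, Nat.card_congr e, Nat.card_eq_fintype_card, Fintype.card_sigma]
  refine Finset.sum_congr rfl fun a _ => ?_
  exact Nat.card_eq_fintype_card.symm.trans ((Nat.card_coe_set_eq {Q | c a Q ≠ 0}).trans (hwc a))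
end

section
/- For every integer m ≥ 3, the weight set of the binary Reed–Muller code RM_2(m−2, m) equals the set of all even integers w with 0 ≤ w ≤ 2^m, except 2 and 2^m − 2; that is, wt(RM_2(m−2,m)) = {0, 2, 4, …, 2^m} \ {2, 2^m − 2}. -/
open MvPolynomial Finset

namespace RMaux

lemma zmod2_ne_zero : ∀ {a : ZMod 2}, a ≠ 0 → a = 1 := by decide
lemma zmod2_add_self : ∀ (a : ZMod 2), a + a = 0 := by decide
lemma zmod2_ne_add : ∀ {a b : ZMod 2}, a ≠ b → a + b = 1 := by decide
lemma zmod2_delta : ∀ (a b : ZMod 2), a + (b + 1) = if a = b then 1 else 0 := by decide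
/-- Sum of a monomial's evaluations over all points. -/
lemma sum_eval_zero {m : ℕ} (f : MvPolynomial (Fin m) (ZMod 2))
    (hdeg : f.totalDegree < m) :
    ∑ P : Fin m → ZMod 2, MvPolynomial.eval P f = 0 := by
  have : ∀ P : Fin m → ZMod 2, eval P f
      = ∑ d ∈ f.support, coeff d f * ∏ i : Fin m, P i ^ d i := fun P => eval_eq' P f
  simp only [this]
  rw [Finset.sum_comm]
  apply Finset.sum_eq_zero
  intro d hd
  rw [← Finset.mul_sum]
  have hswap : ∑ P : Fin m → ZMod 2, ∏ i : Fin m, P i ^ d i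
      = ∏ i : Fin m, ∑ x : ZMod 2, x ^ d i := by
    rw [Finset.prod_univ_sum (fun _ => (univ : Finset (ZMod 2))) (fun i x => x ^ d i)]
    rw [Fintype.piFinset_univ]
  rw [hswap]
  -- some i has d i = 0, else total degree ≥ m
  have hex : ∃ i, d i = 0 := by
    by_contra hc
    push_neg at hc
    have h1 : ∀ i : Fin m, 1 ≤ d i := fun i => Nat.one_le_iff_ne_zero.mpr (hc i)
    have hsum : m ≤ ∑ i : Fin m, d i := by
      calc m = ∑ _i : Fin m, 1 := by simp
        _ ≤ ∑ i : Fin m, d i := Finset.sum_le_sum (fun i _ => h1 i)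
    have hdd : (∑ i : Fin m, d i) ≤ f.totalDegree := by
      have := MvPolynomial.le_totalDegree hd
      -- d.sum (fun _ e => e) ≤ totalDegree
      have hds : d.sum (fun _ e => e) = ∑ i : Fin m, d i := by
        rw [Finsupp.sum_fintype]; simp
      omega
    omega
  obtain ⟨i, hi⟩ := hex
  rw [Finset.prod_eq_zero (Finset.mem_univ i)]
  · ring
  · rw [hi]; decide




lemma hwt_eq_card {ι : Type*} [Fintype ι] [DecidableEq ι] (c : ι → ZMod 2) :
    hwt c = (univ.filter fun i => c i ≠ 0).card := by
  classical
  rw [hwt, Set.ncard_eq_toFinset_card', Set.toFinset_setOf]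

lemma cast_hwt_eq_sum {ι : Type*} [Fintype ι] [DecidableEq ι] (c : ι → ZMod 2) :
    (hwt c : ZMod 2) = ∑ i, c i := by
  classical
  rw [hwt_eq_card]
  rw [← Finset.sum_filter_add_sum_filter_not univ (fun i => c i ≠ 0) c]
  have h1 : ∑ i ∈ univ.filter (fun i => c i ≠ 0), c i
      = ∑ _i ∈ univ.filter (fun i => c i ≠ 0), (1 : ZMod 2) :=
    Finset.sum_congr rfl fun i hi => zmod2_ne_zero (Finset.mem_filter.mp hi).2
  have h2 : ∑ i ∈ univ.filter (fun i => ¬ c i ≠ 0), c i = 0 :=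
    Finset.sum_eq_zero fun i hi => not_not.mp (Finset.mem_filter.mp hi).2
  rw [h1, h2, add_zero, Finset.sum_const, nsmul_eq_mul, mul_one]

/-- any codeword of a polynomial of totalDegree < m has even weight -/
lemma even_hwt {m : ℕ} (c : (Fin m → ZMod 2) → ZMod 2)
    (f : MvPolynomial (Fin m) (ZMod 2)) (hdeg : f.totalDegree < m)
    (heval : ∀ P, MvPolynomial.eval P f = c P) : Even (hwt c) := by
  classical
  have h0 : ((hwt c : ℕ) : ZMod 2) = 0 := by
    rw [cast_hwt_eq_sum]
    rw [← sum_eval_zero f hdeg]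
    exact Finset.sum_congr rfl fun P _ => (heval P).symm
  rcases (ZMod.natCast_eq_zero_iff _ 2).mp h0 with ⟨k, hk⟩
  exact ⟨k, by omega⟩

lemma hwt_ne_two {m : ℕ} (hm : 3 ≤ m) (c : (Fin m → ZMod 2) → ZMod 2)
    (f : MvPolynomial (Fin m) (ZMod 2)) (hdeg : f.totalDegree ≤ m - 2)
    (heval : ∀ P, MvPolynomial.eval P f = c P) : hwt c ≠ 2 := by
  classical
  intro h2
  obtain ⟨P, Q, hPQ, hset⟩ := Set.ncard_eq_two.mp h2
  have hcP : c P ≠ 0 := by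
    have : P ∈ ({P, Q} : Set _) := by left; rfl
    rw [← hset] at this; exact this
  have hcQ : c Q ≠ 0 := by
    have : Q ∈ ({P, Q} : Set _) := by right; rfl
    rw [← hset] at this; exact this
  have hcz : ∀ R, R ≠ P → R ≠ Q → c R = 0 := by
    intro R h1 h2'
    by_contra hc
    have : R ∈ ({P, Q} : Set _) := by rw [← hset]; exact hc
    rcases this with h | h <;> simp_all
  obtain ⟨i, hi⟩ : ∃ i, P i ≠ Q i := by
    by_contra hc; push_neg at hc; exact hPQ (funext hc)
  have hdg : (f * (X i + C (Q i))).totalDegree < m := by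
    have h1 : (X i + C (Q i) : MvPolynomial (Fin m) (ZMod 2)).totalDegree ≤ 1 := by
      refine le_trans (totalDegree_add _ _) ?_
      simp [totalDegree_X, totalDegree_C]
    have := totalDegree_mul f (X i + C (Q i))
    omega
  have hsum := sum_eval_zero _ hdg
  have hevg : ∀ R, eval R (f * (X i + C (Q i))) = c R * (R i + Q i) := by
    intro R; simp [heval R]
  rw [Finset.sum_congr rfl (fun R _ => hevg R)] at hsum
  have hpair : ∑ R : Fin m → ZMod 2, c R * (R i + Q i)
      = ∑ R ∈ ({P, Q} : Finset _), c R * (R i + Q i) := by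
    refine (Finset.sum_subset (Finset.subset_univ _) ?_).symm
    intro R _ hR
    simp only [Finset.mem_insert, Finset.mem_singleton, not_or] at hR
    rw [hcz R hR.1 hR.2, zero_mul]
  rw [hpair, Finset.sum_pair hPQ, zmod2_ne_zero hcP, zmod2_ne_add hi, zmod2_add_self,
    mul_zero, add_zero, mul_one] at hsum
  exact one_ne_zero hsum




lemma indicator_mem {m : ℕ} (hm : 3 ≤ m) (S : Finset (Fin m → ZMod 2))
    (heven : Even S.card) (hsum : ∑ P ∈ S, P = 0) :
    (fun Q => if Q ∈ S then (1 : ZMod 2) else 0) ∈ RMcode (ZMod 2) (m - 2) m := by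
  classical
  refine ⟨∑ P ∈ S, ∏ i : Fin m, (X i + C (P i + 1)), ?_, ?_⟩
  · -- degree bound
    have hrw : (∑ P ∈ S, ∏ i : Fin m, (X i + C (P i + 1)))
        = ∑ t ∈ (univ : Finset (Fin m)).powerset,
            (∏ i ∈ t, X i) * C (∑ P ∈ S, ∏ i ∈ univ \ t, (P i + 1)) := by
      calc ∑ P ∈ S, ∏ i : Fin m, (X i + C (P i + 1))
          = ∑ P ∈ S, ∑ t ∈ (univ : Finset (Fin m)).powerset,
              (∏ i ∈ t, X i) * C (∏ i ∈ univ \ t, (P i + 1)) := by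
            refine Finset.sum_congr rfl fun P _ => ?_
            rw [Finset.prod_add]
            refine Finset.sum_congr rfl fun t _ => ?_
            rw [map_prod]
        _ = ∑ t ∈ (univ : Finset (Fin m)).powerset, ∑ P ∈ S,
              (∏ i ∈ t, X i) * C (∏ i ∈ univ \ t, (P i + 1)) := Finset.sum_comm
        _ = _ := by
            refine Finset.sum_congr rfl fun t _ => ?_
            rw [map_sum, Finset.mul_sum]
    rw [hrw]
    refine le_trans (totalDegree_finset_sum _ _) (Finset.sup_le ?_)
    intro t ht
    by_cases hcard : t.card ≤ m - 2
    · refine le_trans (totalDegree_mul _ _) ?_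
      have h1 : (∏ i ∈ t, (X i : MvPolynomial (Fin m) (ZMod 2))).totalDegree ≤ t.card := by
        refine le_trans (totalDegree_finset_prod _ _) ?_
        calc ∑ i ∈ t, (X i : MvPolynomial (Fin m) (ZMod 2)).totalDegree
            ≤ ∑ _i ∈ t, 1 := Finset.sum_le_sum fun i _ => le_of_eq (totalDegree_X i)
          _ = t.card := by simp
      have h2 : (C (∑ P ∈ S, ∏ i ∈ univ \ t, (P i + 1)) :
          MvPolynomial (Fin m) (ZMod 2)).totalDegree = 0 := totalDegree_C _
      rw [h2, add_zero]
      exact le_trans h1 hcard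
    · -- coefficient is zero
      have htm : t.card ≤ m := by
        have := Finset.card_le_card (Finset.mem_powerset.mp ht)
        simpa using this
      have hz : (∑ P ∈ S, ∏ i ∈ univ \ t, (P i + 1)) = (0 : ZMod 2) := by
        have hcast : ((S.card : ℕ) : ZMod 2) = 0 := by
          rcases heven with ⟨k, hk⟩
          rw [(ZMod.natCast_eq_zero_iff _ 2)]
          exact ⟨k, by omega⟩
        rcases Nat.lt_or_ge t.card m with hlt | hge
        · -- t.card = m - 1, so univ \ t = {j}
          have hone : (univ \ t).card = 1 := by
            rw [Finset.card_sdiff_of_subset (Finset.subset_univ t)]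
            simp only [Finset.card_univ, Fintype.card_fin]
            omega
          obtain ⟨j, hj⟩ := Finset.card_eq_one.mp hone
          rw [hj]
          simp only [Finset.prod_singleton]
          rw [Finset.sum_add_distrib, Finset.sum_const, nsmul_eq_mul, mul_one]
          have : (∑ P ∈ S, P j) = 0 := by
            rw [← Finset.sum_apply j S (fun P => P)]
            rw [hsum]; rfl
          rw [this, hcast, zero_add]
        · -- t = univ
          have : t = univ := Finset.eq_univ_of_card t (by
            simp only [Fintype.card_fin]; omega)
          rw [this, Finset.sdiff_self]
          simp [hcast]
      rw [hz, map_zero, mul_zero]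
      simp
  · -- evaluation
    intro Q
    rw [map_sum]
    have hev : ∀ P, eval Q (∏ i : Fin m, (X i + C (P i + 1)))
        = if Q = P then (1 : ZMod 2) else 0 := by
      intro P
      rw [map_prod]
      have : ∀ i : Fin m, eval Q (X i + C (P i + 1)) = if Q i = P i then (1 : ZMod 2) else 0 := by
        intro i; simp [zmod2_delta (Q i) (P i)]
      rw [Finset.prod_congr rfl fun i _ => this i, Finset.prod_boole]
      congr 1
      simp only [eq_iff_iff]
      constructor
      · intro h; exact funext fun i => h i (Finset.mem_univ i)
      · intro h i _; rw [h]
    rw [Finset.sum_congr rfl fun P _ => hev P]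
    simp [Finset.sum_ite_eq]



lemma zmod2_not_eq_zero : ∀ {a : ZMod 2}, ¬ a = 0 ↔ a = 1 := by decide

variable {m : ℕ}

lemma pi_add_self (g : Fin m → ZMod 2) : g + g = 0 :=
  funext fun i => zmod2_add_self (g i)

lemma card_H (hm : 1 ≤ m) (i0 : Fin m) :
    (univ.filter fun q : Fin m → ZMod 2 => q i0 = 0).card = 2 ^ (m - 1) := by
  classical
  set e0 : Fin m → ZMod 2 := Pi.single i0 1 with he0
  have key : (univ.filter fun q : Fin m → ZMod 2 => q i0 = 0).card
      = (univ.filter fun q : Fin m → ZMod 2 => ¬ q i0 = 0).card := by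
    refine Finset.card_bij' (fun q _ => q + e0) (fun q _ => q + e0) ?_ ?_ ?_ ?_
    · intro q hq
      simp only [Finset.mem_filter, Finset.mem_univ, true_and] at hq ⊢
      simp [he0, hq, Pi.single_eq_same]
    · intro q hq
      simp only [Finset.mem_filter, Finset.mem_univ, true_and] at hq ⊢
      rw [zmod2_not_eq_zero] at hq
      simp [he0, hq, Pi.single_eq_same]
      decide
    · intro q _
      funext i
      simp only [Pi.add_apply]
      rw [add_assoc, zmod2_add_self, add_zero]
    · intro q _
      funext i
      simp only [Pi.add_apply]
      rw [add_assoc, zmod2_add_self, add_zero]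
  clear_value e0
  clear he0
  have htot := Finset.card_filter_add_card_filter_not
    (s := (univ : Finset (Fin m → ZMod 2))) (fun q => q i0 = 0)
  have hcard : (univ : Finset (Fin m → ZMod 2)).card = 2 ^ m := by
    simp [Finset.card_univ]
  have hpow : 2 ^ m = 2 ^ (m - 1) * 2 := by
    conv_lhs => rw [← Nat.sub_add_cancel hm]
    rw [pow_succ]
  have h2 : (univ.filter fun q : Fin m → ZMod 2 => q i0 = 0).card
      + (univ.filter fun q : Fin m → ZMod 2 => ¬ q i0 = 0).card = 2 ^ (m - 1) * 2 := by
    rw [htot, hcard, hpow]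
  rw [← key] at h2
  have h3 : 2 * (univ.filter fun q : Fin m → ZMod 2 => q i0 = 0).card
      = 2 * 2 ^ (m - 1) := by rw [two_mul, h2, mul_comm]
  exact Nat.eq_of_mul_eq_mul_left (by norm_num) h3




variable {m : ℕ}

lemma pairs_block (i0 : Fin m) (Q : Finset (Fin m → ZMod 2)) (hQ : ∀ q ∈ Q, q i0 = 0) :
    Disjoint Q (Q.image (· + Pi.single i0 1)) ∧
    (Q ∪ Q.image (· + Pi.single i0 1)).card = 2 * Q.card ∧
    ∑ P ∈ Q ∪ Q.image (· + Pi.single i0 1), P = Q.card • Pi.single i0 1 := by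
  classical
  set e0 : Fin m → ZMod 2 := Pi.single i0 1 with he0def
  have he0 : e0 i0 = 1 := by rw [he0def]; exact Pi.single_eq_same i0 1
  have hdisj : Disjoint Q (Q.image (· + e0)) := by
    rw [Finset.disjoint_left]
    intro x hxQ hximg
    obtain ⟨q, hq, rfl⟩ := Finset.mem_image.mp hximg
    have h1 : (q + e0) i0 = 0 := hQ _ hxQ
    rw [Pi.add_apply, hQ q hq, he0, zero_add] at h1
    exact (by decide : (1 : ZMod 2) ≠ 0) h1
  have hinj : ∀ x ∈ Q, ∀ y ∈ Q, x + e0 = y + e0 → x = y :=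
    fun x _ y _ h => add_left_injective e0 h
  refine ⟨hdisj, ?_, ?_⟩
  · rw [Finset.card_union_of_disjoint hdisj,
      Finset.card_image_of_injOn (fun x hx y hy h => hinj x hx y hy h)]
    omega
  · rw [Finset.sum_union hdisj, Finset.sum_image hinj, Finset.sum_add_distrib,
      Finset.sum_const]
    generalize (Q.card • e0) = v
    linear_combination pi_add_self (∑ q ∈ Q, q)

lemma exists_zero_sum_set (hm : 3 ≤ m) (w : ℕ) (hw : Even w) (hle : w ≤ 2 ^ m)
    (hne2 : w ≠ 2) (hne2' : w ≠ 2 ^ m - 2) :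
    ∃ S : Finset (Fin m → ZMod 2), S.card = w ∧ ∑ P ∈ S, P = 0 := by
  classical
  obtain ⟨k, hk⟩ := hw
  obtain ⟨i0, i1, i2, hi01, hi02, hi12⟩ : ∃ i0 i1 i2 : Fin m,
      i0 ≠ i1 ∧ i0 ≠ i2 ∧ i1 ≠ i2 :=
    ⟨⟨0, by omega⟩, ⟨1, by omega⟩, ⟨2, by omega⟩,
      by simp [Fin.ext_iff], by simp [Fin.ext_iff], by simp [Fin.ext_iff]⟩
  obtain ⟨H, hHmem, hHcard⟩ : ∃ H : Finset (Fin m → ZMod 2),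
      (∀ q, q ∈ H ↔ q i0 = 0) ∧ H.card = 2 ^ (m - 1) :=
    ⟨univ.filter fun q => q i0 = 0, fun q => by simp, card_H (by omega) i0⟩
  set e0 : Fin m → ZMod 2 := Pi.single i0 1 with he0def
  have hpow : 2 ^ m = 2 ^ (m - 1) * 2 := by
    conv_lhs => rw [← Nat.sub_add_cancel (show 1 ≤ m by omega)]
    rw [pow_succ]
  rcases Nat.even_or_odd k with hke | hko
  · -- k even
    obtain ⟨j, hj⟩ := hke
    have hkH : k ≤ H.card := by rw [hHcard]; omega
    obtain ⟨Q, hQsub, hQcard⟩ := Finset.exists_subset_card_eq hkH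
    have hQ0 : ∀ q ∈ Q, q i0 = 0 := fun q hq => (hHmem q).mp (hQsub hq)
    obtain ⟨_, hcard, hsum⟩ := pairs_block i0 Q hQ0
    refine ⟨Q ∪ Q.image (· + e0), ?_, ?_⟩
    · rw [hcard, hQcard]; omega
    · rw [hsum, hQcard, hj, add_nsmul]
      rw [pi_add_self (j • Pi.single i0 1)]
  · -- k odd
    obtain ⟨j, hj⟩ := hko
    have hj1 : 1 ≤ j := by omega
    have hpow2 : 2 ^ (m - 1) = 2 * 2 ^ (m - 2) := by
      rw [← pow_succ']
      congr 1
      omega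
    have hkb : k ≤ 2 ^ (m - 1) - 3 := by omega
    set e1 : Fin m → ZMod 2 := Pi.single i1 1 with he1def
    set e2 : Fin m → ZMod 2 := Pi.single i2 1 with he2def
    have he00 : e0 i0 = 1 := Pi.single_eq_same i0 1
    have he01 : e0 i1 = 0 := Pi.single_eq_of_ne hi01.symm 1
    have he02 : e0 i2 = 0 := Pi.single_eq_of_ne hi02.symm 1
    have he10 : e1 i0 = 0 := Pi.single_eq_of_ne hi01 1
    have he11 : e1 i1 = 1 := Pi.single_eq_same i1 1
    have he12 : e1 i2 = 0 := Pi.single_eq_of_ne hi12.symm 1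
    have he20 : e2 i0 = 0 := Pi.single_eq_of_ne hi02 1
    have he21 : e2 i1 = 0 := Pi.single_eq_of_ne hi12 1
    have he22 : e2 i2 = 1 := Pi.single_eq_same i2 1
    set e012 : Fin m → ZMod 2 := e0 + e1 + e2 with he012def
    have he012_0 : e012 i0 = 1 := by
      rw [he012def, Pi.add_apply, Pi.add_apply, he00, he10, he20]; decide
    -- distinctness of F elements
    have d01 : (0 : Fin m → ZMod 2) ≠ e1 := fun h => by
      have h' := congrFun h i1; rw [Pi.zero_apply, he11] at h'
      exact (by decide : (0 : ZMod 2) ≠ 1) h'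
    have d02 : (0 : Fin m → ZMod 2) ≠ e2 := fun h => by
      have h' := congrFun h i2; rw [Pi.zero_apply, he22] at h'
      exact (by decide : (0 : ZMod 2) ≠ 1) h'
    have d03 : (0 : Fin m → ZMod 2) ≠ e012 := fun h => by
      have h' := congrFun h i0; rw [Pi.zero_apply, he012_0] at h'
      exact (by decide : (0 : ZMod 2) ≠ 1) h'
    have d12 : e1 ≠ e2 := fun h => by
      have h' := congrFun h i1; rw [he11, he21] at h'
      exact (by decide : (1 : ZMod 2) ≠ 0) h'
    have d13 : e1 ≠ e012 := fun h => by
      have h' := congrFun h i0; rw [he10, he012_0] at h'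
      exact (by decide : (0 : ZMod 2) ≠ 1) h'
    have d23 : e2 ≠ e012 := fun h => by
      have h' := congrFun h i0; rw [he20, he012_0] at h'
      exact (by decide : (0 : ZMod 2) ≠ 1) h'
    have dR3 : e1 + e2 ≠ (0 : Fin m → ZMod 2) := fun h => by
      have h' := congrFun h i1; rw [Pi.add_apply, he11, he21, Pi.zero_apply] at h'
      exact (by decide : (1 : ZMod 2) + 0 ≠ 0) h'
    have dR31 : e1 + e2 ≠ e1 := fun h => by
      have h' := congrFun h i2; rw [Pi.add_apply, he12, he22] at h'
      exact (by decide : (0 : ZMod 2) + 1 ≠ 0) h'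
    have dR32 : e1 + e2 ≠ e2 := fun h => by
      have h' := congrFun h i1; rw [Pi.add_apply, he11, he21] at h'
      exact (by decide : (1 : ZMod 2) + 0 ≠ 0) h'
    -- the sets R and F
    set R : Finset (Fin m → ZMod 2) := {0, e1, e2, e1 + e2} with hRdef
    set F : Finset (Fin m → ZMod 2) := {0, e1, e2, e012} with hFdef
    have hFcard : F.card = 4 := by
      rw [hFdef]
      rw [Finset.card_insert_of_notMem (by simp [d01, d02, d03]),
        Finset.card_insert_of_notMem (by simp [d12, d13]),
        Finset.card_insert_of_notMem (by simp [d23]),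
        Finset.card_singleton]
    have hFsum : ∑ P ∈ F, P = e0 := by
      rw [hFdef,
        Finset.sum_insert (by simp [d01, d02, d03]),
        Finset.sum_insert (by simp [d12, d13]),
        Finset.sum_insert (by simp [d23]),
        Finset.sum_singleton, he012def]
      linear_combination pi_add_self e1 + pi_add_self e2
    have hR4 : R.card ≤ 4 := by
      rw [hRdef]
      refine le_trans (Finset.card_insert_le _ _) (Nat.succ_le_succ ?_)
      refine le_trans (Finset.card_insert_le _ _) (Nat.succ_le_succ ?_)
      refine le_trans (Finset.card_insert_le _ _) (Nat.succ_le_succ ?_)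
      simp
    -- choose Q
    have hsub : k - 2 ≤ (H \ R).card := by
      have h5 := Finset.le_card_sdiff R H
      have h6 : 4 ≤ H.card := by rw [hHcard]; omega
      omega
    obtain ⟨Q, hQsub, hQcard⟩ := Finset.exists_subset_card_eq hsub
    have hQH : ∀ q ∈ Q, q ∈ H := fun q hq => (Finset.mem_sdiff.mp (hQsub hq)).1
    have hQ0 : ∀ q ∈ Q, q i0 = 0 := fun q hq => (hHmem q).mp (hQH q hq)
    have hQR : ∀ q ∈ Q, q ∉ R := fun q hq => (Finset.mem_sdiff.mp (hQsub hq)).2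
    obtain ⟨hdisj, hcard, hsum⟩ := pairs_block i0 Q hQ0
    -- disjointness of the union with F
    have hUF : Disjoint (Q ∪ Q.image (· + e0)) F := by
      rw [Finset.disjoint_right]
      intro x hxF
      rw [hFdef] at hxF
      simp only [Finset.mem_insert, Finset.mem_singleton] at hxF
      rw [Finset.mem_union, Finset.mem_image]
      push_neg
      have hxi0 : x i0 = 0 ∨ x = e012 := by
        rcases hxF with rfl | rfl | rfl | rfl
        · exact Or.inl (Pi.zero_apply i0)
        · exact Or.inl he10
        · exact Or.inl he20
        · exact Or.inr rfl
      constructor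
      · -- x ∉ Q
        intro hxQ
        have := hQR x hxQ
        rcases hxF with rfl | rfl | rfl | rfl
        · exact this (by rw [hRdef]; simp)
        · exact this (by rw [hRdef]; simp)
        · exact this (by rw [hRdef]; simp)
        · exact (by decide : (1 : ZMod 2) ≠ 0) (he012_0 ▸ hQ0 _ hxQ)
      · -- x not in the image
        intro q hq habs
        have hq0 : q i0 = 0 := hQ0 q hq
        have hxq : x i0 = 1 := by
          rw [← habs, Pi.add_apply, hq0, he00, zero_add]
        rcases hxi0 with h0 | rfl
        · rw [h0] at hxq; exact (by decide : (0 : ZMod 2) ≠ 1) hxq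
        · -- q = e1 + e2 ∈ R
          have hqval : q = e1 + e2 := by
            have : q + e0 = e0 + e1 + e2 := by rw [habs, he012def]
            linear_combination this
          exact hQR q hq (by rw [hRdef, hqval]; simp)
    refine ⟨(Q ∪ Q.image (· + e0)) ∪ F, ?_, ?_⟩
    · rw [Finset.card_union_of_disjoint hUF, hcard, hFcard, hQcard]
      omega
    · rw [Finset.sum_union hUF, hsum, hFsum, hQcard]
      have hk2 : k - 2 + 1 = j + j := by omega
      calc (k - 2) • e0 + e0 = (k - 2 + 1) • e0 := (succ_nsmul e0 (k - 2)).symm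
        _ = j • e0 + j • e0 := by rw [hk2, add_nsmul]
        _ = 0 := pi_add_self _
lemma zmod2_compl : ∀ a : ZMod 2, (a + 1 ≠ 0) ↔ ¬ a ≠ 0 := by decide

lemma hwt_le {m : ℕ} (c : (Fin m → ZMod 2) → ZMod 2) : hwt c ≤ 2 ^ m := by
  classical
  rw [hwt_eq_card]
  calc (univ.filter fun P => c P ≠ 0).card ≤ (univ : Finset (Fin m → ZMod 2)).card :=
        Finset.card_filter_le _ _
    _ = 2 ^ m := by simp [Finset.card_univ]

lemma hwt_add_hwt_compl {m : ℕ} (c : (Fin m → ZMod 2) → ZMod 2) :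
    hwt (fun P => c P + 1) + hwt c = 2 ^ m := by
  classical
  rw [hwt_eq_card, hwt_eq_card]
  have h1 : (univ.filter fun P : Fin m → ZMod 2 => c P + 1 ≠ 0)
      = (univ.filter fun P => ¬ c P ≠ 0) :=
    Finset.filter_congr fun P _ => zmod2_compl (c P)
  calc (univ.filter fun P : Fin m → ZMod 2 => c P + 1 ≠ 0).card
        + (univ.filter fun P : Fin m → ZMod 2 => c P ≠ 0).card
      = (univ.filter fun P : Fin m → ZMod 2 => c P ≠ 0).card
        + (univ.filter fun P : Fin m → ZMod 2 => ¬ c P ≠ 0).card := by rw [h1, add_comm]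
    _ = (univ : Finset (Fin m → ZMod 2)).card :=
        Finset.card_filter_add_card_filter_not _
    _ = 2 ^ m := by simp [Finset.card_univ]

lemma hwt_indicator {m : ℕ} (S : Finset (Fin m → ZMod 2)) :
    hwt (fun Q => if Q ∈ S then (1 : ZMod 2) else 0) = S.card := by
  classical
  rw [hwt]
  have h : {Q | (if Q ∈ S then (1 : ZMod 2) else 0) ≠ 0} = ↑S := by
    ext Q
    by_cases hQ : Q ∈ S <;> simp [hQ]
  rw [h, Set.ncard_coe_finset]

end RMaux

/-- For `m ≥ 3`, the weight set of the binary Reed–Muller code `RM_2(m-2, m)` is the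
set of even integers `w` with `0 ≤ w ≤ 2^m`, excluding `2` and `2^m - 2`. -/
theorem stmt15 (m : ℕ) (hm : 3 ≤ m) :
    {w : ℕ | ∃ c ∈ RMcode (ZMod 2) (m - 2) m, hwt c = w}
      = {w : ℕ | Even w ∧ w ≤ 2 ^ m} \ {2, 2 ^ m - 2} := by
  classical
  ext w
  simp only [Set.mem_setOf_eq, Set.mem_diff, Set.mem_insert_iff, Set.mem_singleton_iff]
  constructor
  · rintro ⟨c, ⟨f, hdeg, heval⟩, rfl⟩
    have hlt : f.totalDegree < m := by omega
    have heven := RMaux.even_hwt c f hlt heval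
    have hle := RMaux.hwt_le c
    have hne2 := RMaux.hwt_ne_two hm c f hdeg heval
    have hne2' : hwt c ≠ 2 ^ m - 2 := by
      intro heq
      have hdeg' : (f + 1).totalDegree ≤ m - 2 := by
        refine le_trans (MvPolynomial.totalDegree_add f 1) ?_
        simp only [MvPolynomial.totalDegree_one, sup_le_iff]
        exact ⟨hdeg, by omega⟩
      have heval' : ∀ P, MvPolynomial.eval P (f + 1) = c P + 1 := fun P => by
        rw [map_add, heval, map_one]
      have hcompl := RMaux.hwt_add_hwt_compl c
      have h2m : 2 ≤ 2 ^ m := by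
        calc 2 = 2 ^ 1 := rfl
          _ ≤ 2 ^ m := Nat.pow_le_pow_right (by norm_num) (by omega)
      have h2 : hwt (fun P => c P + 1) = 2 := by omega
      exact RMaux.hwt_ne_two hm (fun P => c P + 1) (f + 1) hdeg' heval' h2
    exact ⟨⟨heven, hle⟩, by tauto⟩
  · rintro ⟨⟨hev, hle⟩, hne⟩
    push_neg at hne
    obtain ⟨S, hcard, hsum⟩ := RMaux.exists_zero_sum_set hm w hev hle hne.1 hne.2
    refine ⟨fun Q => if Q ∈ S then (1 : ZMod 2) else 0,
      RMaux.indicator_mem hm S (by rw [hcard]; exact hev) hsum, ?_⟩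
    rw [RMaux.hwt_indicator, hcard]
end

section
/- Let q > 2 be a prime power and r ≥ 2 an integer with (q,r) ≠ (3,2). Then the q-ary Hamming code H_r(q) contains a codeword of full weight, i.e., a codeword c with w_H(c) = θ_q(r−1) = (q^r − 1)/(q − 1) (all coordinates of c are nonzero). -/
/-- `P_r(q)`: the set of nonzero vectors of `F^r` whose first nonzero entry equals `1`,
a set of representatives of the projective space `PG(r-1, q)`. -/
def ProjReps (F : Type*) [Zero F] [One F] (r : ℕ) : Set (Fin r → F) :=
  {u | ∃ i : Fin r, u i = 1 ∧ ∀ j : Fin r, j < i → u j = 0}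

/-- The `q`-ary Hamming code `H_r(q)`: all vectors `c`, with coordinates indexed by
`P_r(q)`, such that `Σ_{u ∈ P_r(q)} c_u • u = 0` in `F^r`. -/
def HammingCode (F : Type*) [Field F] (r : ℕ) : Set (ProjReps F r → F) :=
  {c | ∑ᶠ u : ProjReps F r, c u • (u : Fin r → F) = 0}

open Finset

section Aux

variable {F : Type*} [Field F] [Fintype F] [DecidableEq F] {r : ℕ}

/-- The slice of `P_r(q)` with pivot at `i`. -/
def Pf (F : Type*) [Field F] [Fintype F] [DecidableEq F] (r : ℕ) (i : Fin r) :
    Finset (Fin r → F) :=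
  univ.filter fun u => u i = 1 ∧ ∀ j : Fin r, j < i → u j = 0

/-- `P_r(q)` as a `Finset`. -/
def PF (F : Type*) [Field F] [Fintype F] [DecidableEq F] (r : ℕ) : Finset (Fin r → F) :=
  univ.biUnion (Pf F r)

lemma mem_Pf {i : Fin r} {u : Fin r → F} :
    u ∈ Pf F r i ↔ u i = 1 ∧ ∀ j : Fin r, j < i → u j = 0 := by
  simp [Pf]

lemma mem_PF {u : Fin r → F} : u ∈ PF F r ↔ u ∈ ProjReps F r := by
  simp [PF, mem_Pf, ProjReps]

lemma Pf_disjoint' {i j : Fin r} (hij : i ≠ j) : Disjoint (Pf F r i) (Pf F r j) := by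
  rw [Finset.disjoint_left]
  intro u hu hu'
  rw [mem_Pf] at hu hu'
  rcases lt_or_gt_of_ne hij with h | h
  · exact one_ne_zero (hu.1.symm.trans (hu'.2 i h))
  · exact one_ne_zero (hu'.1.symm.trans (hu.2 j h))

lemma Pf_disjoint :
    Set.PairwiseDisjoint (↑(univ : Finset (Fin r)) : Set (Fin r)) (Pf F r) :=
  fun i _ j _ hij => Pf_disjoint' hij

/-- Vectors in the pivot-`i` slice are determined by their values above `i`. -/
def pfEquiv (i : Fin r) : {u : Fin r → F // u ∈ Pf F r i} ≃ ({j : Fin r // i < j} → F) where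
  toFun u j := u.1 j.1
  invFun f := ⟨fun j => if h : i < j then f ⟨j, h⟩ else if j = i then 1 else 0, by
    rw [mem_Pf]
    constructor
    · simp
    · intro j hj
      rw [dif_neg (by exact fun h => absurd (hj.trans h) (lt_irrefl _)),
        if_neg (by exact fun h => absurd (h ▸ hj) (lt_irrefl _))]⟩
  left_inv u := by
    apply Subtype.ext
    funext j
    show (if h : i < j then u.1 j else if j = i then 1 else 0) = u.1 j
    by_cases h : i < j
    · rw [dif_pos h]
    · rw [dif_neg h]
      by_cases h' : j = i
      · rw [if_pos h', h', (mem_Pf.1 u.2).1]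
      · rw [if_neg h']
        exact ((mem_Pf.1 u.2).2 j (lt_of_le_of_ne (not_lt.1 h) h')).symm
  right_inv f := by
    funext j
    simp [j.2]

lemma card_Pf (i : Fin r) : (Pf F r i).card = Fintype.card F ^ (r - 1 - (i : ℕ)) := by
  rw [← Fintype.card_coe, Fintype.card_congr (pfEquiv i), Fintype.card_fun]
  congr 1
  rw [Fintype.card_subtype]
  rw [show (univ.filter fun j : Fin r => i < j) = Finset.Ioi i from
    Finset.ext fun j => by simp, Fin.card_Ioi]

lemma exists_ne01 (h : 2 < Fintype.card F) : ∃ x : F, x ≠ 0 ∧ x ≠ 1 := by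
  by_contra hc
  push_neg at hc
  have hsub : (univ : Finset F) ⊆ ({0, 1} : Finset F) := by
    intro x _
    by_cases h0 : x = 0
    · simp [h0]
    · simp [hc x h0]
  have h1 := Finset.card_le_card hsub
  rw [Finset.card_univ] at h1
  have h2 : ({0, 1} : Finset F).card ≤ 2 :=
    le_trans (Finset.card_insert_le _ _) (by simp)
  omega

lemma exists_ne012 (h : 3 < Fintype.card F) : ∃ x : F, x ≠ 0 ∧ x ≠ 1 ∧ x ≠ 2 := by
  by_contra hc
  push_neg at hc
  have hsub : (univ : Finset F) ⊆ ({0, 1, 2} : Finset F) := by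
    intro x _
    by_cases h0 : x = 0
    · simp [h0]
    · by_cases h1 : x = 1
      · simp [h1]
      · simp [hc x h0 h1]
  have h1 := Finset.card_le_card hsub
  rw [Finset.card_univ] at h1
  have h2 : ({0, 1, 2} : Finset F).card ≤ 3 :=
    le_trans (Finset.card_insert_le _ _)
      (by have := Finset.card_insert_le (1 : F) ({2} : Finset F); simp at this ⊢; omega)
  omega

lemma sum_Pf_gt (hq2 : 2 < Fintype.card F) {i j : Fin r} (hij : i < j) :
    ∑ u ∈ Pf F r i, u j = 0 := by
  obtain ⟨x, hx0, hx1⟩ := exists_ne01 (F := F) hq2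
  have key : ∑ u ∈ Pf F r i, x * u j = ∑ u ∈ Pf F r i, u j := by
    refine Finset.sum_nbij' (fun u => Function.update u j (x * u j))
      (fun u => Function.update u j (x⁻¹ * u j)) ?_ ?_ ?_ ?_ ?_
    · intro u hu
      rw [mem_Pf] at hu ⊢
      refine ⟨?_, fun j' hj' => ?_⟩
      · show Function.update u j (x * u j) i = 1
        rw [Function.update_of_ne (Fin.ne_of_lt hij)]; exact hu.1
      · show Function.update u j (x * u j) j' = 0
        rw [Function.update_of_ne (Fin.ne_of_lt (hj'.trans hij))]; exact hu.2 j' hj'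
    · intro u hu
      rw [mem_Pf] at hu ⊢
      refine ⟨?_, fun j' hj' => ?_⟩
      · show Function.update u j (x⁻¹ * u j) i = 1
        rw [Function.update_of_ne (Fin.ne_of_lt hij)]; exact hu.1
      · show Function.update u j (x⁻¹ * u j) j' = 0
        rw [Function.update_of_ne (Fin.ne_of_lt (hj'.trans hij))]; exact hu.2 j' hj'
    · intro u _
      show Function.update (Function.update u j (x * u j)) j (x⁻¹ * Function.update u j (x * u j) j) = u
      funext k
      by_cases hk : k = j
      · subst hk; simp [inv_mul_cancel_left₀ hx0]
      · simp [Function.update_of_ne hk]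
    · intro u _
      show Function.update (Function.update u j (x⁻¹ * u j)) j (x * Function.update u j (x⁻¹ * u j) j) = u
      funext k
      by_cases hk : k = j
      · subst hk; simp [mul_inv_cancel_left₀ hx0]
      · simp [Function.update_of_ne hk]
    · intro u _
      show x * u j = Function.update u j (x * u j) j
      simp
  rw [← Finset.mul_sum] at key
  have h0 : (x - 1) * ∑ u ∈ Pf F r i, u j = 0 := by rw [sub_mul, one_mul, key, sub_self]
  rcases mul_eq_zero.1 h0 with h | h
  · exact absurd (sub_eq_zero.1 h) hx1
  · exact h

lemma sum_Pf_self (i : Fin r) :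
    ∑ u ∈ Pf F r i, u i = ((Fintype.card F ^ (r - 1 - (i : ℕ)) : ℕ) : F) := by
  calc ∑ u ∈ Pf F r i, u i = ∑ _u ∈ Pf F r i, (1 : F) :=
        Finset.sum_congr rfl fun u hu => (mem_Pf.1 hu).1
    _ = (Pf F r i).card • (1 : F) := Finset.sum_const 1
    _ = _ := by rw [nsmul_eq_mul, mul_one, card_Pf]

lemma sum_PF (hq2 : 2 < Fintype.card F) (hr : 1 ≤ r) :
    ∑ u ∈ PF F r, u = Pi.single (⟨r - 1, by omega⟩ : Fin r) (1 : F) := by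
  funext k
  rw [Finset.sum_apply, PF, Finset.sum_biUnion Pf_disjoint,
    Finset.sum_eq_single_of_mem k (mem_univ k) ?_]
  · rw [sum_Pf_self]
    by_cases hk : k = (⟨r - 1, by omega⟩ : Fin r)
    · subst hk
      simp
    · rw [Pi.single_eq_of_ne hk]
      have hkv : (k : ℕ) ≠ r - 1 := fun h => hk (Fin.ext h)
      have hkr : (k : ℕ) < r := k.isLt
      rw [Nat.cast_pow, FiniteField.cast_card_eq_zero, zero_pow (by omega)]
  · intro i _ hik
    rcases lt_or_gt_of_ne hik with h | h
    · exact sum_Pf_gt hq2 h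
    · exact Finset.sum_eq_zero fun u hu => (mem_Pf.1 hu).2 k h

lemma card_PF (hq2 : 2 < Fintype.card F) :
    (PF F r).card = (Fintype.card F ^ r - 1) / (Fintype.card F - 1) := by
  set q := Fintype.card F with hq
  have hq1 : 1 ≤ q := by omega
  rw [PF, Finset.card_biUnion fun i _ j _ hij => Pf_disjoint' hij]
  have h1 : ∑ i : Fin r, (Pf F r i).card = ∑ i : Fin r, q ^ (r - 1 - (i : ℕ)) :=
    Finset.sum_congr rfl fun i _ => card_Pf i
  rw [h1, Fin.sum_univ_eq_sum_range (fun k => q ^ (r - 1 - k)) r,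
    Finset.sum_range_reflect (fun k => q ^ k) r]
  exact Nat.geomSum_eq (by omega) r

lemma key_sum (hq2 : 2 < Fintype.card F) (hr : 1 ≤ r) (D : Finset (Fin r → F))
    (hD : D ⊆ PF F r) (c' : (Fin r → F) → F) (h1 : ∀ u ∉ D, c' u = 1)
    (hs : ∑ u ∈ D, (c' u - 1) • u = -Pi.single (⟨r - 1, by omega⟩ : Fin r) (1 : F)) :
    ∑ u ∈ PF F r, c' u • u = 0 := by
  have expand : ∀ u : Fin r → F, c' u • u = u + (c' u - 1) • u := by
    intro u; rw [sub_smul, one_smul]; abel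
  calc ∑ u ∈ PF F r, c' u • u = ∑ u ∈ PF F r, (u + (c' u - 1) • u) :=
        Finset.sum_congr rfl fun u _ => expand u
    _ = (∑ u ∈ PF F r, u) + ∑ u ∈ PF F r, (c' u - 1) • u := Finset.sum_add_distrib
    _ = Pi.single (⟨r - 1, by omega⟩ : Fin r) (1 : F) + ∑ u ∈ D, (c' u - 1) • u := by
        rw [sum_PF hq2 hr,
          ← Finset.sum_subset hD fun x _ hx => by rw [h1 x hx, sub_self, zero_smul]]
    _ = 0 := by rw [hs]; simp

lemma build (hq2 : 2 < Fintype.card F) (c' : (Fin r → F) → F)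
    (hne : ∀ v, c' v ≠ 0) (hsum0 : ∑ u ∈ PF F r, c' u • u = 0) :
    ∃ c ∈ HammingCode F r, hwt c = (Fintype.card F ^ r - 1) / (Fintype.card F - 1) := by
  haveI : Fintype ↥(ProjReps F r) := (Set.toFinite _).fintype
  have hPF : (ProjReps F r).toFinset = PF F r :=
    Finset.ext fun u => by simp [Set.mem_toFinset, mem_PF]
  refine ⟨fun u => c' ↑u, ?_, ?_⟩
  · show ∑ᶠ u : ↥(ProjReps F r), c' ↑u • (↑u : Fin r → F) = 0
    rw [finsum_eq_sum_of_fintype,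
      Finset.sum_set_coe (f := fun v : Fin r → F => c' v • v), hPF]
    exact hsum0
  · show hwt (fun u : ↥(ProjReps F r) => c' ↑u) = _
    unfold hwt
    have huniv : {i : ↥(ProjReps F r) | c' ↑i ≠ 0} = Set.univ :=
      Set.eq_univ_of_forall fun i => hne ↑i
    rw [huniv, Set.ncard_univ, Nat.card_coe_set_eq,
      show ProjReps F r = ↑(PF F r) from Set.ext fun u => (mem_PF (u := u)).symm,
      Set.ncard_coe_finset, card_PF hq2]

end Aux

/-- For a prime power `q > 2` and `r ≥ 2` with `(q,r) ≠ (3,2)`, the Hamming code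
`H_r(q)` contains a codeword of full weight `θ_q(r-1) = (q^r - 1)/(q - 1)`. -/
theorem stmt18 {F : Type*} [Field F] [Fintype F]
    (q : ℕ) (hq : q = Fintype.card F) (hq2 : 2 < q)
    (r : ℕ) (hr : 2 ≤ r) (hex : ¬(q = 3 ∧ r = 2)) :
    ∃ c ∈ HammingCode F r, hwt c = (q ^ r - 1) / (q - 1) := by
  letI : DecidableEq F := Classical.decEq F
  subst hq
  have hq2' : 2 < Fintype.card F := hq2
  set last : Fin r := ⟨r - 1, by omega⟩ with hlast
  set slast : Fin r := ⟨r - 2, by omega⟩ with hslast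
  have hsl_lt : slast < last := by
    rw [Fin.lt_def]; simp only [hlast, hslast]; omega
  have hsl_ne : slast ≠ last := Fin.ne_of_lt hsl_lt
  obtain ⟨e, he⟩ : ∃ e : Fin r → F, e = Pi.single last (1 : F) := ⟨_, rfl⟩
  obtain ⟨a, ha⟩ : ∃ a : Fin r → F, a = Pi.single slast (1 : F) := ⟨_, rfl⟩
  have he_mem : e ∈ PF F r := mem_PF.2 ⟨last, by simp [he], fun j hj => by
    rw [he, Pi.single_eq_of_ne (Fin.ne_of_lt hj)]⟩
  by_cases hq4 : 3 < Fintype.card F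
  · -- q ≥ 4 : use three vectors a, b = a + e, e
    obtain ⟨μ, hμ0, hμ1, hμ2⟩ := exists_ne012 (F := F) hq4
    obtain ⟨b, hb⟩ : ∃ b : Fin r → F, b = a + e := ⟨_, rfl⟩
    have hav : ∀ j : Fin r, j < slast → a j = 0 := fun j hj => by
      rw [ha, Pi.single_eq_of_ne (Fin.ne_of_lt hj)]
    have hev : ∀ j : Fin r, j < last → e j = 0 := fun j hj => by
      rw [he, Pi.single_eq_of_ne (Fin.ne_of_lt hj)]
    have ha_mem : a ∈ PF F r := mem_PF.2 ⟨slast, by simp [ha], hav⟩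
    have hb_mem : b ∈ PF F r := mem_PF.2 ⟨slast, by
      rw [hb, Pi.add_apply, ha, Pi.single_eq_same, he, Pi.single_eq_of_ne hsl_ne, add_zero],
      fun j hj => by
        rw [hb, Pi.add_apply, hav j hj, hev j (hj.trans hsl_lt), add_zero]⟩
    have hal : a last = 0 := by rw [ha, Pi.single_eq_of_ne hsl_ne.symm]
    have hbl : b last = 1 := by rw [hb, Pi.add_apply, hal, he, Pi.single_eq_same, zero_add]
    have has : a slast = 1 := by rw [ha, Pi.single_eq_same]
    have hes : e slast = 0 := by rw [he, Pi.single_eq_of_ne hsl_ne]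
    have hbs : b slast = 1 := by rw [hb, Pi.add_apply, has, hes, add_zero]
    have hab : a ≠ b := fun h => by
      have := congrFun h last; rw [hal, hbl] at this; exact zero_ne_one this
    have hae : a ≠ e := fun h => by
      have := congrFun h slast; rw [has, hes] at this; exact one_ne_zero this
    have hbe : b ≠ e := fun h => by
      have := congrFun h slast; rw [hbs, hes] at this; exact one_ne_zero this
    obtain ⟨c', hc'⟩ : ∃ c' : (Fin r → F) → F, c' =
        fun v => if v = a then 2 - μ else if v = b then μ else if v = e then 1 - μ else 1 :=
      ⟨_, rfl⟩
    have hca : c' a = 2 - μ := by simp [hc']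
    have hcb : c' b = μ := by simp [hc', hab.symm]
    have hce : c' e = 1 - μ := by simp [hc', hae.symm, hbe.symm]
    apply build hq2' c'
    · intro v
      simp only [hc']
      split_ifs with h1 h2 h3
      · exact sub_ne_zero.2 (Ne.symm hμ2)
      · exact hμ0
      · exact sub_ne_zero.2 (Ne.symm hμ1)
      · exact one_ne_zero
    · apply key_sum hq2' (by omega) ({a, b, e} : Finset (Fin r → F))
      · intro u hu
        simp only [Finset.mem_insert, Finset.mem_singleton] at hu
        rcases hu with h | h | h <;> subst h <;> assumption
      · intro u hu
        simp only [Finset.mem_insert, Finset.mem_singleton] at hu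
        push_neg at hu
        simp only [hc']
        rw [if_neg hu.1, if_neg hu.2.1, if_neg hu.2.2]
      · have hne1 : a ∉ ({b, e} : Finset (Fin r → F)) := by simp [hab, hae]
        have hne2 : b ∉ ({e} : Finset (Fin r → F)) := by simp [hbe]
        have hsum3 : ∑ u ∈ ({a, b, e} : Finset (Fin r → F)), (c' u - 1) • u
            = (c' a - 1) • a + ((c' b - 1) • b + (c' e - 1) • e) := by
          rw [Finset.sum_insert hne1, Finset.sum_insert hne2, Finset.sum_singleton]
        have hfin : (c' a - 1) • a + ((c' b - 1) • b + (c' e - 1) • e) = -e := by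
          rw [hca, hcb, hce, hb]
          show (2 - μ - 1) • a + ((μ - 1) • (a + e) + (1 - μ - 1) • e) = -e
          module
        exact hsum3.trans (hfin.trans (congrArg Neg.neg he))
  · -- q = 3, r ≥ 3
    have hq3 : Fintype.card F = 3 := by omega
    have hr3 : 3 ≤ r := by
      rcases Nat.lt_or_ge r 3 with h | h
      · interval_cases r
        · exact absurd ⟨by omega, rfl⟩ hex
      · exact h
    have h3 : (3 : F) = 0 := by
      have := FiniteField.cast_card_eq_zero F
      rw [hq3] at this
      exact_mod_cast this
    have h2 : (2 : F) = -1 := by linear_combination h3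
    have h1n : (1 : F) ≠ -1 := by
      intro h
      have h20 : (2 : F) = 0 := by linear_combination h
      rw [h2] at h20
      exact (one_ne_zero : (1:F) ≠ 0) (by linear_combination (-1 : F) * h20)
    set tlast : Fin r := ⟨r - 3, by omega⟩ with htlast
    have htl_lt : tlast < slast := by rw [Fin.lt_def]; simp only [htlast, hslast]; omega
    have htl_ne : tlast ≠ slast := Fin.ne_of_lt htl_lt
    have htll : tlast < last := htl_lt.trans hsl_lt
    obtain ⟨t, ht⟩ : ∃ t : Fin r → F, t = Pi.single tlast (1 : F) := ⟨_, rfl⟩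
    obtain ⟨v2, hv2⟩ : ∃ v2 : Fin r → F, v2 = t + a + e := ⟨_, rfl⟩
    obtain ⟨v3, hv3⟩ : ∃ v3 : Fin r → F, v3 = t - a + e := ⟨_, rfl⟩
    have htv : ∀ j : Fin r, j < tlast → t j = 0 := fun j hj => by
      rw [ht, Pi.single_eq_of_ne (Fin.ne_of_lt hj)]
    have hav : ∀ j : Fin r, j < slast → a j = 0 := fun j hj => by
      rw [ha, Pi.single_eq_of_ne (Fin.ne_of_lt hj)]
    have hev : ∀ j : Fin r, j < last → e j = 0 := fun j hj => by
      rw [he, Pi.single_eq_of_ne (Fin.ne_of_lt hj)]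
    have htt : t tlast = 1 := by rw [ht, Pi.single_eq_same]
    have hat : a tlast = 0 := by rw [ha, Pi.single_eq_of_ne htl_ne]
    have het : e tlast = 0 := by rw [he, Pi.single_eq_of_ne (Fin.ne_of_lt htll)]
    have hts : t slast = 0 := by rw [ht, Pi.single_eq_of_ne htl_ne.symm]
    have has : a slast = 1 := by rw [ha, Pi.single_eq_same]
    have hes : e slast = 0 := by rw [he, Pi.single_eq_of_ne hsl_ne]
    have ht_mem : t ∈ PF F r := mem_PF.2 ⟨tlast, htt, htv⟩
    have hv2_mem : v2 ∈ PF F r := mem_PF.2 ⟨tlast, by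
      rw [hv2]; simp only [Pi.add_apply]; rw [htt, hat, het]; ring,
      fun j hj => by
        rw [hv2]; simp only [Pi.add_apply]
        rw [htv j hj, hav j (hj.trans htl_lt), hev j (hj.trans htll)]; ring⟩
    have hv3_mem : v3 ∈ PF F r := mem_PF.2 ⟨tlast, by
      rw [hv3]; simp only [Pi.add_apply, Pi.sub_apply]; rw [htt, hat, het]; ring,
      fun j hj => by
        rw [hv3]; simp only [Pi.add_apply, Pi.sub_apply]
        rw [htv j hj, hav j (hj.trans htl_lt), hev j (hj.trans htll)]; ring⟩
    have hv2s : v2 slast = 1 := by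
      rw [hv2]; simp only [Pi.add_apply]; rw [hts, has, hes]; ring
    have hv3s : v3 slast = -1 := by
      rw [hv3]; simp only [Pi.add_apply, Pi.sub_apply]; rw [hts, has, hes]; ring
    have htv2 : t ≠ v2 := fun h => by
      have := congrFun h slast; rw [hts, hv2s] at this; exact zero_ne_one this
    have htv3 : t ≠ v3 := fun h => by
      have := congrFun h slast; rw [hts, hv3s] at this
      exact (one_ne_zero : (1:F) ≠ 0) (by linear_combination this)
    have hv23 : v2 ≠ v3 := fun h => by
      have := congrFun h slast; rw [hv2s, hv3s] at this; exact h1n this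
    obtain ⟨c', hc'⟩ : ∃ c' : (Fin r → F) → F, c' =
        fun v => if v = t then 2 else if v = v2 then 2 else if v = v3 then 2 else 1 :=
      ⟨_, rfl⟩
    have hct : c' t = 2 := by simp [hc']
    have hcv2 : c' v2 = 2 := by simp [hc', htv2.symm]
    have hcv3 : c' v3 = 2 := by simp [hc', htv3.symm, hv23.symm]
    apply build hq2' c'
    · intro v
      simp only [hc']
      have h2ne : (2 : F) ≠ 0 := by rw [h2]; exact neg_ne_zero.2 one_ne_zero
      split_ifs <;> first | exact h2ne | exact one_ne_zero
    · apply key_sum hq2' (by omega) ({t, v2, v3} : Finset (Fin r → F))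
      · intro u hu
        simp only [Finset.mem_insert, Finset.mem_singleton] at hu
        rcases hu with h | h | h <;> subst h <;> assumption
      · intro u hu
        simp only [Finset.mem_insert, Finset.mem_singleton] at hu
        push_neg at hu
        simp only [hc']
        rw [if_neg hu.1, if_neg hu.2.1, if_neg hu.2.2]
      · have hne1 : t ∉ ({v2, v3} : Finset (Fin r → F)) := by simp [htv2, htv3]
        have hne2 : v2 ∉ ({v3} : Finset (Fin r → F)) := by simp [hv23]
        have hsum3 : ∑ u ∈ ({t, v2, v3} : Finset (Fin r → F)), (c' u - 1) • u
            = (c' t - 1) • t + ((c' v2 - 1) • v2 + (c' v3 - 1) • v3) := by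
          rw [Finset.sum_insert hne1, Finset.sum_insert hne2, Finset.sum_singleton]
        have hfin : (c' t - 1) • t + ((c' v2 - 1) • v2 + (c' v3 - 1) • v3) = -e := by
          rw [hct, hcv2, hcv3, hv2, hv3]
          have hkey : ((2 : F) - 1) • t + (((2 : F) - 1) • (t + a + e) + ((2 : F) - 1) • (t - a + e))
              = (3 : F) • t + (2 : F) • e := by module
          rw [hkey, h3, h2, zero_smul, zero_add, neg_smul, one_smul]
        exact hsum3.trans (hfin.trans (congrArg Neg.neg he))
end
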